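/- arXiv:2406.13160 — 3 statements merged into one kernel-verified Lean document; each statement's English description precedes it below -/
import Mathlib

section
/- For any x ∈ Â, i ∈ I and m ∈ Z, one has M(f_{i,m−1}·x) = M(x·f_{i,m+1}), where M : Â → Q(q^{1/2}) is the projection onto the component of the identity in the weight-product decomposition of Â. -/
/- Common setting: a symmetrizable generalized Cartan matrix, the field
`𝕂 = ℚ(q^{1/2})` (with `sqv = q^{1/2}` and `q = qh = sqv²`), quantum integers, the bosonic
extension `hA A` presented by the `q`-Serre relations and the bosonic commutation
relations, its weight spaces and distinguished subalgebras, and the root-lattice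
pairing. -/

set_option maxHeartbeats 1000000
set_option synthInstance.maxHeartbeats 400000

noncomputable section

structure GCM (I : Type) where
  c : I → I → ℤ
  d : I → ℤ
  d_pos : ∀ i, 0 < d i
  diag : ∀ i, c i i = 2
  offdiag : ∀ i j, i ≠ j → c i j ≤ 0
  dsymm : ∀ i j, d i * c i j = d j * c j i

abbrev 𝕂 : Type := RatFunc ℚ

/-- The square root `q^{1/2}` of `q`. -/
def sqv : 𝕂 := RatFunc.X

/-- The indeterminate `q = (q^{1/2})²`. -/
def qh : 𝕂 := sqv ^ 2

def qNum (t : 𝕂) (n : ℕ) : 𝕂 := (t ^ n - t⁻¹ ^ n) / (t - t⁻¹)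

def qFact (t : 𝕂) (n : ℕ) : 𝕂 := ∏ k ∈ Finset.range n, qNum t (k + 1)

def qBinom (t : 𝕂) (m k : ℕ) : 𝕂 := qFact t m / (qFact t k * qFact t (m - k))

variable {I : Type} [DecidableEq I]

/-- `q_i = q^{d_i}`. -/
def qd (A : GCM I) (i : I) : 𝕂 := qh ^ A.d i

/-- `ζ_i = 1 - q_i²`. -/
def zi (A : GCM I) (i : I) : 𝕂 := 1 - qd A i ^ 2

/-- The `q`-Serre element `Σ_{k=0}^{b_{ij}} (-1)^k [b_{ij} choose k]_{q_i} a^k b a^{b_{ij}-k}`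
for elements `a, b` of any `𝕂`-algebra, where `b_{ij} = 1 - c_{ij}`. -/
def serreIn {R : Type} [Ring R] [Algebra 𝕂 R] (A : GCM I) (i j : I) (a b : R) : R :=
  ∑ k ∈ Finset.range ((1 - A.c i j).toNat + 1),
    ((-1 : 𝕂) ^ k * qBinom (qd A i) ((1 - A.c i j).toNat) k) •
      (a ^ k * b * a ^ ((1 - A.c i j).toNat - k))

/-- The defining relations of the bosonic extension: (a) for each `p`, the `q`-Serre
relations among the `f_{i,p}`; (b) for `m < p`,
`f_{i,m} f_{j,p} = q^{(-1)^{p-m+1}(α_i,α_j)} f_{j,p} f_{i,m} + δ_{(j,p),(i,m+1)}(1-q_i²)`. -/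
inductive hARel (A : GCM I) : FreeAlgebra 𝕂 (I × ℤ) → FreeAlgebra 𝕂 (I × ℤ) → Prop
  | serre (i j : I) (p : ℤ) (h : i ≠ j) :
      hARel A (serreIn A i j (FreeAlgebra.ι 𝕂 (i, p)) (FreeAlgebra.ι 𝕂 (j, p))) 0
  | comm (i j : I) (m p : ℤ) (h : m < p) :
      hARel A (FreeAlgebra.ι 𝕂 (i, m) * FreeAlgebra.ι 𝕂 (j, p))
        (qh ^ (((p - m + 1).negOnePow : ℤ) * (A.d i * A.c i j)) •
            (FreeAlgebra.ι 𝕂 (j, p) * FreeAlgebra.ι 𝕂 (i, m))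
          + if j = i ∧ p = m + 1 then ((1 : 𝕂) - qd A i ^ 2) • 1 else 0)

/-- The bosonic extension `Â` associated with the generalized Cartan matrix. -/
abbrev hA (A : GCM I) : Type := RingQuot (hARel A)

/-- The generator `f_{i,p}` of the bosonic extension. -/
def ff (A : GCM I) (i : I) (p : ℤ) : hA A :=
  RingQuot.mkAlgHom 𝕂 (hARel A) (FreeAlgebra.ι 𝕂 (i, p))

/-- The symmetric bilinear pairing on the root lattice, `(α_i, α_j) = d_i c_{ij}`. -/
def ip (A : GCM I) (β γ : I →₀ ℤ) : ℤ :=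
  β.sum fun i a => γ.sum fun j b => a * b * (A.d i * A.c i j)

/-- `α_{i,m} = (-1)^m α_i` as an element of the root lattice. -/
def aim (i : I) (m : ℤ) : I →₀ ℤ := Finsupp.single i ((m.negOnePow : ℤ))

/-- The weight space of weight `β` of `Â`, where `wt (f_{i,p}) = (-1)^{p+1} α_i`. -/
def hAwt (A : GCM I) (β : I →₀ ℤ) : Submodule 𝕂 (hA A) :=
  Submodule.span 𝕂 {x | ∃ l : List (I × ℤ),
    (l.map fun p => Finsupp.single p.1 (((p.2 + 1).negOnePow : ℤ))).sum = β ∧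
    x = (l.map fun p => ff A p.1 p.2).prod}

/-- The subalgebra `Â[a,b]` generated by `{f_{i,k} | a ≤ k ≤ b}`. -/
def hAband (A : GCM I) (a b : ℤ) : Subalgebra 𝕂 (hA A) :=
  Algebra.adjoin 𝕂 {x | ∃ i k, a ≤ k ∧ k ≤ b ∧ x = ff A i k}

/-- The subalgebra `Â[m]`. -/
def hAk (A : GCM I) (m : ℤ) : Subalgebra 𝕂 (hA A) := hAband A m m

/-- The subalgebra `Â_{≥ m}`. -/
def hAge (A : GCM I) (m : ℤ) : Subalgebra 𝕂 (hA A) :=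
  Algebra.adjoin 𝕂 {x | ∃ i k, m ≤ k ∧ x = ff A i k}

/-- The subalgebra `Â_{≤ m}`. -/
def hAle (A : GCM I) (m : ℤ) : Subalgebra 𝕂 (hA A) :=
  Algebra.adjoin 𝕂 {x | ∃ i k, k ≤ m ∧ x = ff A i k}

/-- The subalgebra `Â_{> m}`. -/
def hAgt (A : GCM I) (m : ℤ) : Subalgebra 𝕂 (hA A) := hAge A (m + 1)

/-- The subalgebra `Â_{< m}`. -/
def hAlt (A : GCM I) (m : ℤ) : Subalgebra 𝕂 (hA A) := hAle A (m - 1)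

/-! The commutation relations straighten every monomial into a combination of words whose
levels decrease from left to right, so these sorted words span `Â`. `M` kills every nonempty
sorted word: its top-level block is an element of some `Â[k]` of nonzero weight, followed by an
element of `Â_{<k}`. Straightening `f_{i,m-1} · w` (resp. `w · f_{i,m+1}`) for a sorted word `w`
produces, modulo nonempty sorted words, a constant only through the relation
`f_{i,m-1} f_{i,m} = q^{…} f_{i,m} f_{i,m-1} + (1 - q_i²)` (resp. for `f_{i,m} f_{i,m+1}`), that
is, exactly when `w = f_{i,m}`. So both sides of the identity equal `(1 - q_i²) M(1)` at
`x = f_{i,m}` and vanish at every other sorted word. -/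

open Submodule Set

variable (A : GCM I)

def word (l : List (I × ℤ)) : hA A := (l.map fun p => ff A p.1 p.2).prod

@[simp] lemma word_nil : word A [] = 1 := rfl

@[simp] lemma word_cons (x : I × ℤ) (l : List (I × ℤ)) :
    word A (x :: l) = ff A x.1 x.2 * word A l := by simp [word]

@[simp] lemma word_append (l l' : List (I × ℤ)) : word A (l ++ l') = word A l * word A l' := by
  simp [word]

lemma word_mem_adjoin {s : Set (hA A)} {l : List (I × ℤ)} (h : ∀ p ∈ l, ff A p.1 p.2 ∈ s) :
    word A l ∈ Algebra.adjoin 𝕂 s :=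
  Subalgebra.list_prod_mem _ fun _ hy => by
    obtain ⟨p, hp, rfl⟩ := List.mem_map.mp hy
    exact Algebra.subset_adjoin (h p hp)

lemma ff_mul_ff_of_lt (i j : I) {m p : ℤ} (h : m < p) :
    ff A i m * ff A j p =
      qh ^ (((p - m + 1).negOnePow : ℤ) * (A.d i * A.c i j)) • (ff A j p * ff A i m)
        + if j = i ∧ p = m + 1 then zi A i • 1 else 0 := by
  simpa [ff, zi, apply_ite (RingQuot.mkAlgHom 𝕂 (hARel A))] using
    RingQuot.mkAlgHom_rel 𝕂 (hARel.comm (A := A) i j m p h)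

def wordWeight (l : List (I × ℤ)) : I →₀ ℤ :=
  (l.map fun p => Finsupp.single p.1 (((p.2 + 1).negOnePow : ℤ))).sum

lemma word_mem_hAwt (l : List (I × ℤ)) : word A l ∈ hAwt A (wordWeight l) :=
  subset_span ⟨l, rfl, rfl⟩

omit [DecidableEq I] in
lemma wordWeight_ne_zero_of_level_eq {l : List (I × ℤ)} {k : ℤ} (hl : ∀ p ∈ l, p.2 = k)
    (hne : l ≠ []) : wordWeight l ≠ 0 := by
  obtain ⟨x, hx⟩ := List.exists_mem_of_ne_nil l hne
  have hsum :
      wordWeight l = ((k + 1).negOnePow : ℤ) • (l.map fun p => Finsupp.single p.1 1).sum := by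
    rw [List.smul_sum, List.map_map, wordWeight]
    congr 1
    refine List.map_congr_left fun p hp => ?_
    simp [hl p hp]
  have hpos : Finsupp.single x.1 1 ≤ (l.map fun p => Finsupp.single p.1 (1 : ℤ)).sum :=
    List.single_le_sum (fun _ hy => by
      obtain ⟨p, -, rfl⟩ := List.mem_map.mp hy
      exact Finsupp.single_nonneg.mpr zero_le_one) _ (List.mem_map_of_mem hx)
  rw [hsum, smul_ne_zero_iff]
  refine ⟨Units.ne_zero _, fun h0 => ?_⟩
  simpa [h0] using hpos x.1

-- Levels decrease, matching the order `Â_{>m} · Â[m] · Â_{<m}` in `KillsNonzeroWeight`.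
def IsSorted (l : List (I × ℤ)) : Prop := l.Pairwise fun p q => q.2 ≤ p.2

omit [DecidableEq I] in
lemma IsSorted.level_le_head {x : I × ℤ} {l : List (I × ℤ)} (hl : IsSorted (x :: l)) :
    ∀ p ∈ x :: l, p.2 ≤ x.2 := by
  simp only [List.mem_cons, forall_eq_or_imp, le_refl, true_and]
  exact (List.pairwise_cons.mp hl).1

omit [DecidableEq I] in
lemma IsSorted.exists_eq_append {l : List (I × ℤ)} (hl : IsSorted l) (d : ℤ) :
    ∃ u w, l = u ++ w ∧ (∀ p ∈ u, d ≤ p.2) ∧ ∀ p ∈ w, p.2 < d := by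
  induction l with
  | nil => exact ⟨[], [], rfl, by simp, by simp⟩
  | cons x t ih =>
    rcases le_or_gt d x.2 with h | h
    · obtain ⟨u, w, rfl, hu, hw⟩ := ih (List.pairwise_cons.mp hl).2
      exact ⟨x :: u, w, rfl, by simpa [h] using hu, hw⟩
    · exact ⟨[], x :: t, rfl, by simp, fun p hp => (hl.level_le_head p hp).trans_lt h⟩

def KillsNonzeroWeight (M : hA A →ₗ[𝕂] 𝕂) : Prop :=
  ∀ (m : ℤ) (β : I →₀ ℤ), β ≠ 0 → ∀ y, y ∈ hAk A m → y ∈ hAwt A β →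
    ∀ u ∈ hAgt A m, ∀ v ∈ hAlt A m, M (u * y * v) = 0

variable {A} {M : hA A →ₗ[𝕂] 𝕂}

lemma KillsNonzeroWeight.apply_word_eq_zero (hM : KillsNonzeroWeight A M) {l : List (I × ℤ)}
    (hl : IsSorted l) (hne : l ≠ []) : M (word A l) = 0 := by
  obtain ⟨x, t, rfl⟩ := List.exists_cons_of_ne_nil hne
  obtain ⟨u, w, huw, hu, hw⟩ := hl.exists_eq_append x.2
  have hxu : x ∈ u := by
    rcases List.mem_append.mp (huw ▸ List.mem_cons_self : x ∈ u ++ w) with h | h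
    · exact h
    · exact absurd (hw x h) (lt_irrefl _)
  have hu_level : ∀ p ∈ u, p.2 = x.2 := fun p hp =>
    le_antisymm (hl.level_le_head p (huw ▸ List.mem_append_left w hp)) (hu p hp)
  have h := hM x.2 (wordWeight u) (wordWeight_ne_zero_of_level_eq hu_level (List.ne_nil_of_mem hxu))
    (word A u)
    (word_mem_adjoin A fun p hp => ⟨p.1, p.2, (hu_level p hp).ge, (hu_level p hp).le, rfl⟩)
    (word_mem_hAwt A u) 1 (one_mem _) (word A w)
    (word_mem_adjoin A fun p hp => ⟨p.1, p.2, by linarith [hw p hp], rfl⟩)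
  rwa [one_mul, ← word_append, ← huw] at h

variable (A)

-- The empty word is excluded, so that `M` vanishes on this span.
def sortedSpan (s : Set ℤ) : Submodule 𝕂 (hA A) :=
  span 𝕂 (word A '' {l | l ≠ [] ∧ IsSorted l ∧ ∀ p ∈ l, p.2 ∈ s})

variable {A}

lemma word_mem_sortedSpan {s : Set ℤ} {l : List (I × ℤ)} (hne : l ≠ []) (hl : IsSorted l)
    (hs : ∀ p ∈ l, p.2 ∈ s) : word A l ∈ sortedSpan A s :=
  subset_span ⟨l, ⟨hne, hl, hs⟩, rfl⟩

lemma KillsNonzeroWeight.apply_eq_zero_of_mem_sortedSpan (hM : KillsNonzeroWeight A M)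
    {s : Set ℤ} {z : hA A} (hz : z ∈ sortedSpan A s) : M z = 0 :=
  span_le (p := LinearMap.ker M) |>.mpr
    (by rintro _ ⟨l, ⟨hne, hl, -⟩, rfl⟩; exact hM.apply_word_eq_zero hl hne) hz

lemma ff_mem_sortedSpan {s : Set ℤ} {x : I × ℤ} (hx : x.2 ∈ s) :
    ff A x.1 x.2 ∈ sortedSpan A s := by
  simpa using word_mem_sortedSpan (List.cons_ne_nil x []) (List.pairwise_singleton _ x)
    (by simpa using hx)

lemma word_sub_mem_sortedSpan {s : Set ℤ} {l : List (I × ℤ)} (hl : IsSorted l)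
    (hs : ∀ p ∈ l, p.2 ∈ s) :
    word A l - (if l = [] then 1 else 0 : 𝕂) • 1 ∈ sortedSpan A s := by
  rcases l with _ | ⟨x, l⟩
  · simp
  · simpa using word_mem_sortedSpan (List.cons_ne_nil x l) hl hs

lemma ff_mul_mem_sortedSpan {x : I × ℤ} {c : ℤ} (hx : x.2 ≤ c) {z : hA A} (a : 𝕂)
    (hz : z - a • 1 ∈ sortedSpan A (Iic x.2)) : ff A x.1 x.2 * z ∈ sortedSpan A (Iic c) := by
  have hmul : sortedSpan A (Iic x.2) ≤
      (sortedSpan A (Iic c)).comap (LinearMap.mulLeft 𝕂 (ff A x.1 x.2)) := by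
    refine span_le.mpr ?_
    rintro _ ⟨r, ⟨-, hr, hrx⟩, rfl⟩
    simpa using word_mem_sortedSpan (List.cons_ne_nil x r) (List.pairwise_cons.mpr ⟨hrx, hr⟩)
      (by simpa [hx] using fun p hp => (hrx p hp).trans hx)
  have h := add_mem (show ff A x.1 x.2 * (z - a • 1) ∈ sortedSpan A (Iic c) from hmul hz)
    (smul_mem _ a (ff_mem_sortedSpan (mem_Iic.mpr hx)))
  simpa [mul_sub] using h

lemma mul_ff_mem_sortedSpan {x : I × ℤ} {c : ℤ} (hx : c ≤ x.2) {z : hA A} (a : 𝕂)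
    (hz : z - a • 1 ∈ sortedSpan A (Ici x.2)) : z * ff A x.1 x.2 ∈ sortedSpan A (Ici c) := by
  have hmul : sortedSpan A (Ici x.2) ≤
      (sortedSpan A (Ici c)).comap (LinearMap.mulRight 𝕂 (ff A x.1 x.2)) := by
    refine span_le.mpr ?_
    rintro _ ⟨r, ⟨-, hr, hrx⟩, rfl⟩
    simpa using word_mem_sortedSpan (s := Ici c) (List.concat_ne_nil x r)
      (List.pairwise_append.mpr ⟨hr, List.pairwise_singleton _ x, by simpa using hrx⟩)
      (by
        simp only [List.mem_append, List.mem_singleton, or_imp, forall_and, forall_eq, mem_Ici]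
        exact ⟨fun p hp => hx.trans (hrx p hp), hx⟩)
  have h := add_mem (show (z - a • 1) * ff A x.1 x.2 ∈ sortedSpan A (Ici c) from hmul hz)
    (smul_mem _ a (ff_mem_sortedSpan (mem_Ici.mpr hx)))
  simpa [sub_mul] using h

lemma ff_mul_word_sub_mem_sortedSpan (i : I) (n : ℤ) {l : List (I × ℤ)} (hl : IsSorted l)
    {c : ℤ} (hn : n ≤ c) (hlc : ∀ p ∈ l, p.2 ≤ c) :
    ff A i n * word A l - (if l = [(i, n + 1)] then zi A i else 0) • 1 ∈
      sortedSpan A (Iic c) := by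
  induction l generalizing c with
  | nil => simpa using ff_mem_sortedSpan (A := A) (x := (i, n)) (mem_Iic.mpr hn)
  | cons x l ih =>
    obtain ⟨hxl, hl'⟩ := List.pairwise_cons.mp hl
    rcases le_or_gt x.2 n with hxn | hnx
    · have hne : x :: l ≠ [(i, n + 1)] := by
        rintro ⟨⟩
        omega
      simpa [hne] using word_mem_sortedSpan (A := A) (List.cons_ne_nil (i, n) (x :: l))
        (List.pairwise_cons.mpr ⟨by simpa [hxn] using fun p hp => (hxl p hp).trans hxn, hl⟩)
        (by simpa [hn] using hlc)
    · have hstep := ff_mul_mem_sortedSpan (hlc x List.mem_cons_self) _ (ih hl' hnx.le hxl)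
      rw [word_cons, ← mul_assoc, ff_mul_ff_of_lt A i x.1 hnx]
      generalize qh ^ (((x.2 - n + 1).negOnePow : ℤ) * (A.d i * A.c i x.1)) = κ
      by_cases hx : x = (i, n + 1)
      · subst hx
        have hw : word A l - (if l = [] then 1 else 0 : 𝕂) • 1 ∈ sortedSpan A (Iic c) :=
          word_sub_mem_sortedSpan hl' fun p hp => (hxl p hp).trans (hlc _ List.mem_cons_self)
        convert add_mem (smul_mem _ κ hstep) (smul_mem _ (zi A i) hw) using 1
        rw [if_pos ⟨rfl, rfl⟩]
        simp only [List.cons.injEq, true_and]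
        split_ifs with h0
        · subst h0
          simp
        · simp [add_mul, mul_assoc]
      · have hx' : ¬(x.1 = i ∧ x.2 = n + 1) := fun h => hx (Prod.ext h.1 h.2)
        simpa [hx, hx', add_mul, mul_assoc] using smul_mem _ κ hstep

lemma word_mul_ff_sub_mem_sortedSpan (i : I) (n : ℤ) {l : List (I × ℤ)} (hl : IsSorted l)
    {c : ℤ} (hn : c ≤ n) (hlc : ∀ p ∈ l, c ≤ p.2) :
    word A l * ff A i n - (if l = [(i, n - 1)] then zi A i else 0) • 1 ∈
      sortedSpan A (Ici c) := by
  induction l using List.reverseRecOn generalizing c with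
  | nil => simpa using ff_mem_sortedSpan (A := A) (x := (i, n)) (mem_Ici.mpr hn)
  | append_singleton l x ih =>
    obtain ⟨hl', -, hlx⟩ := List.pairwise_append.mp hl
    simp only [List.mem_singleton, forall_eq] at hlx
    have hlc' : ∀ p ∈ l, c ≤ p.2 := fun p hp => hlc p (List.mem_append_left _ hp)
    have hxc : c ≤ x.2 := hlc x (by simp)
    rcases le_or_gt n x.2 with hnx | hxn
    · have hne : l ++ [x] ≠ [(i, n - 1)] := fun h => by
        obtain rfl :=
          List.mem_singleton.mp (h ▸ List.mem_append_right l (List.mem_singleton_self x))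
        dsimp at hnx
        omega
      have hsorted : IsSorted (l ++ [x] ++ [(i, n)]) := by
        refine List.pairwise_append.mpr ⟨hl, List.pairwise_singleton _ _, ?_⟩
        simp only [List.forall_mem_append, List.forall_mem_singleton] at hlx ⊢
        exact ⟨fun p hp => hnx.trans (hlx p hp), hnx⟩
      have hlevel : ∀ p ∈ l ++ [x] ++ [(i, n)], p.2 ∈ Ici c := by
        simp only [List.forall_mem_append, List.forall_mem_singleton, mem_Ici]
        exact ⟨⟨hlc', hxc⟩, hn⟩
      simpa [hne, mul_assoc] using word_mem_sortedSpan (A := A) (by simp) hsorted hlevel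
    · have hstep := mul_ff_mem_sortedSpan hxc _ (ih hl' hxn.le hlx)
      rw [word_append, word_cons, word_nil, mul_one, mul_assoc, ff_mul_ff_of_lt A x.1 i hxn]
      generalize qh ^ (((n - x.2 + 1).negOnePow : ℤ) * (A.d x.1 * A.c x.1 i)) = κ
      by_cases hx : x = (i, n - 1)
      · subst hx
        have hw : word A l - (if l = [] then 1 else 0 : 𝕂) • 1 ∈ sortedSpan A (Ici c) :=
          word_sub_mem_sortedSpan hl' fun p hp => hxc.trans (hlx p hp)
        convert add_mem (smul_mem _ κ hstep) (smul_mem _ (zi A i) hw) using 1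
        have hC : l ++ [(i, n - 1)] = [(i, n - 1)] ↔ l = [] := by simp
        rw [if_pos ⟨rfl, by omega⟩]
        simp only [hC]
        split_ifs with h0
        · subst h0
          simp [mul_add]
        · simp [mul_add, mul_assoc]
      · have hx' : ¬(i = x.1 ∧ n = x.2 + 1) := fun h => hx (Prod.ext h.1.symm (by omega))
        have hne : l ++ [x] ≠ [(i, n - 1)] := fun h =>
          hx (List.mem_singleton.mp (h ▸ List.mem_append_right l (List.mem_singleton_self x)))
        rw [if_neg hx', if_neg hne]
        simpa [mul_add, mul_assoc] using smul_mem _ κ hstep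

omit [DecidableEq I] in
lemma exists_forall_level_mem_Icc (l : List (I × ℤ)) (n : ℤ) :
    ∃ c, n ∈ Icc (-c) c ∧ ∀ p ∈ l, p.2 ∈ Icc (-c) c := by
  have hnonneg : ∀ a ∈ l.map (|·.2|), 0 ≤ a := fun a ha => by
    obtain ⟨p, -, rfl⟩ := List.mem_map.mp ha
    exact abs_nonneg _
  refine ⟨|n| + (l.map (|·.2|)).sum,
    abs_le.mp (le_add_of_nonneg_right (List.sum_nonneg hnonneg)), fun p hp => abs_le.mp ?_⟩
  exact (List.single_le_sum hnonneg _ (List.mem_map_of_mem hp)).trans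
    (le_add_of_nonneg_left (abs_nonneg n))

lemma KillsNonzeroWeight.apply_ff_mul_word (hM : KillsNonzeroWeight A M) (i : I) (n : ℤ)
    {l : List (I × ℤ)} (hl : IsSorted l) :
    M (ff A i n * word A l) = (if l = [(i, n + 1)] then zi A i else 0) * M 1 := by
  obtain ⟨c, hn, hlc⟩ := exists_forall_level_mem_Icc l n
  have h := hM.apply_eq_zero_of_mem_sortedSpan
    (ff_mul_word_sub_mem_sortedSpan i n hl hn.2 fun p hp => (hlc p hp).2)
  rwa [map_sub, map_smul, sub_eq_zero] at h

lemma KillsNonzeroWeight.apply_word_mul_ff (hM : KillsNonzeroWeight A M) (i : I) (n : ℤ)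
    {l : List (I × ℤ)} (hl : IsSorted l) :
    M (word A l * ff A i n) = (if l = [(i, n - 1)] then zi A i else 0) * M 1 := by
  obtain ⟨c, hn, hlc⟩ := exists_forall_level_mem_Icc l n
  have h := hM.apply_eq_zero_of_mem_sortedSpan
    (word_mul_ff_sub_mem_sortedSpan i n hl hn.1 fun p hp => (hlc p hp).1)
  rwa [map_sub, map_smul, sub_eq_zero] at h

variable (A)

lemma span_word_isSorted_eq_top : span 𝕂 (word A '' {l | IsSorted l}) = ⊤ := by
  set S := span 𝕂 (word A '' {l | IsSorted l})
  have hsorted : ∀ s, sortedSpan A s ≤ S := fun s =>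
    span_mono (image_mono fun l hl => hl.2.1)
  have hff : ∀ (i : I) (n : ℤ), S ≤ S.comap (LinearMap.mulLeft 𝕂 (ff A i n)) := by
    intro i n
    refine span_le.mpr ?_
    rintro _ ⟨l, hl, rfl⟩
    obtain ⟨c, hn, hlc⟩ := exists_forall_level_mem_Icc l n
    have h := add_mem
      (hsorted _ (ff_mul_word_sub_mem_sortedSpan i n hl hn.2 fun p hp => (hlc p hp).2))
      (smul_mem S (if l = [(i, n + 1)] then zi A i else 0) (subset_span ⟨[], .nil, rfl⟩))
    simpa using h
  have hmul :
      ∀ y : FreeAlgebra 𝕂 (I × ℤ), ∀ z ∈ S, RingQuot.mkAlgHom 𝕂 (hARel A) y * z ∈ S := by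
    intro y
    induction y using FreeAlgebra.induction with
    | grade0 r => simpa [Algebra.smul_def] using fun z hz => smul_mem S r hz
    | grade1 x => exact fun z hz => hff x.1 x.2 hz
    | mul a b ha hb => simpa [mul_assoc] using fun z hz => ha _ (hb z hz)
    | add a b ha hb => simpa [add_mul] using fun z hz => add_mem (ha z hz) (hb z hz)
  refine eq_top_iff.mpr fun x _ => ?_
  obtain ⟨y, rfl⟩ := RingQuot.mkAlgHom_surjective 𝕂 (hARel A) x
  simpa using hmul y 1 (subset_span ⟨[], .nil, rfl⟩)

theorem statement8_general (A : GCM I)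
    (M : hA A →ₗ[𝕂] 𝕂)
    (hMzero : ∀ (m : ℤ) (β : I →₀ ℤ), β ≠ 0 → ∀ y, y ∈ hAk A m → y ∈ hAwt A β →
      ∀ u ∈ hAgt A m, ∀ v ∈ hAlt A m, M (u * y * v) = 0) :
    ∀ (x : hA A) (i : I) (m : ℤ),
      M (ff A i (m - 1) * x) = M (x * ff A i (m + 1)) := by
  intro x i m
  have hM : KillsNonzeroWeight A M := hMzero
  have key : M ∘ₗ LinearMap.mulLeft 𝕂 (ff A i (m - 1)) =
      M ∘ₗ LinearMap.mulRight 𝕂 (ff A i (m + 1)) := by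
    refine LinearMap.ext_on (span_word_isSorted_eq_top A) ?_
    rintro _ ⟨l, hl, rfl⟩
    simp [hM.apply_ff_mul_word _ _ hl, hM.apply_word_mul_ff _ _ hl]
  exact LinearMap.congr_fun key x

/-- `M(f_{i,m-1} x) = M(x f_{i,m+1})` for all `x ∈ Â`, `i ∈ I`, `m ∈ ℤ`.
The projection `M : Â → ℚ(q^{1/2})` onto the component of the identity in the
weight-product decomposition of `Â` is characterized by: `M(1) = 1` and `M` kills every
product `u y v` with `u ∈ Â_{>m}`, `v ∈ Â_{<m}` and `y ∈ Â[m]` homogeneous of nonzero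
weight. -/
theorem statement8 (A : GCM I)
    (M : hA A →ₗ[𝕂] 𝕂)
    (hMone : M 1 = 1)
    (hMzero : ∀ (m : ℤ) (β : I →₀ ℤ), β ≠ 0 → ∀ y, y ∈ hAk A m → y ∈ hAwt A β →
      ∀ u ∈ hAgt A m, ∀ v ∈ hAlt A m, M (u * y * v) = 0) :
    ∀ (x : hA A) (i : I) (m : ℤ),
      M (ff A i (m - 1) * x) = M (x * ff A i (m + 1)) :=
  statement8_general A M hMzero

end
end

section
/- For any x ∈ Â one has M(x^⋆) = M(𝒟̄(x)) = M(x); consequently, for the form ⟨⟨x,y⟩⟩ = M(x·𝒟̄(y)) one has ⟨⟨x,y⟩⟩ = ⟨⟨𝒟̄(x), 𝒟̄(y)⟩⟩ = ⟨⟨y^⋆, x^⋆⟩⟩ for all x,y ∈ Â, and ⟨⟨x,y⟩⟩ = 0 whenever x,y are homogeneous with wt(x) ≠ wt(y). -/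
/- Common setting: a symmetrizable generalized Cartan matrix, the field
`𝕂 = ℚ(q^{1/2})` (with `sqv = q^{1/2}` and `q = qh = sqv²`), quantum integers, the bosonic
extension `hA A` presented by the `q`-Serre relations and the bosonic commutation
relations, its weight spaces and distinguished subalgebras, and the root-lattice
pairing. -/

set_option maxHeartbeats 1000000
set_option synthInstance.maxHeartbeats 400000

noncomputable section

variable {I : Type} [DecidableEq I]

/-!
By the commutation relations, every element of `Â` is a linear combination of ordered monomials
`f_{i₁,p₁} ⋯ f_{iₖ,pₖ}` with `p₁ ≥ ⋯ ≥ pₖ`, and reordering a monomial preserves its weight. A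
normalised functional with the vanishing property of `M` kills every nonempty ordered monomial: its
leading block at level `p₁` lies in `Â[p₁]` and has nonzero weight, while the rest lies in
`Â_{<p₁}`. Hence such a functional is unique, and it vanishes on weight spaces of nonzero weight.
Since `⋆` and `𝒟̄` permute the subalgebras `Â[m]`, `Â_{>m}`, `Â_{<m}` and the weight spaces in the
appropriate way, `M ∘ ⋆` and `M ∘ 𝒟̄` have the same properties and therefore equal `M`. The
identities for `⟨⟨x, y⟩⟩` then follow, using `𝒟̄ ∘ ⋆ ∘ 𝒟̄ = ⋆`.
-/

namespace BosonicExtension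

section Words

variable {ι : Type*}

def letterWt (p : ι × ℤ) : ι →₀ ℤ := Finsupp.single p.1 ((p.2 + 1).negOnePow : ℤ)

def wordWt (l : List (ι × ℤ)) : ι →₀ ℤ := (l.map letterWt).sum

@[simp] lemma wordWt_nil : wordWt ([] : List (ι × ℤ)) = 0 := rfl

@[simp] lemma wordWt_cons (p : ι × ℤ) (l : List (ι × ℤ)) :
    wordWt (p :: l) = letterWt p + wordWt l := List.sum_cons

lemma letterWt_add_one (i : ι) (p : ℤ) : letterWt (i, p + 1) = -letterWt (i, p) := by
  simp [letterWt, Int.negOnePow_succ]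

lemma letterWt_neg (i : ι) (p : ℤ) : letterWt (i, -p) = letterWt (i, p) := by
  rw [letterWt, letterWt, show -p + 1 = (p + 1) + 2 * (-p) by ring, Int.negOnePow_add,
    Int.negOnePow_two_mul, mul_one]

lemma degree_wordWt_of_forall_snd_eq {m : ℤ} :
    ∀ l : List (ι × ℤ), (∀ q ∈ l, q.2 = m) →
      (wordWt l).degree = ((m + 1).negOnePow : ℤ) * l.length
  | [], _ => by simp
  | q :: l, h => by
    rw [wordWt_cons, map_add, degree_wordWt_of_forall_snd_eq l fun r hr => h r (by simp [hr]),
      letterWt, Finsupp.degree_single, h q (by simp), List.length_cons]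
    push_cast
    ring

lemma wordWt_ne_zero_of_forall_snd_eq {m : ℤ} {l : List (ι × ℤ)} (hl : l ≠ [])
    (h : ∀ q ∈ l, q.2 = m) : wordWt l ≠ 0 := by
  intro h0
  have hlen : (l.length : ℤ) ≠ 0 := by simpa using hl
  exact mul_ne_zero (Units.ne_zero (m + 1).negOnePow) hlen
    (by rw [← degree_wordWt_of_forall_snd_eq l h, h0, map_zero])

def Descending : ℤ → List (ι × ℤ) → Prop
  | _, [] => True
  | N, q :: l => q.2 ≤ N ∧ Descending q.2 l

lemma Descending.mono {l : List (ι × ℤ)} {N N' : ℤ} (h : N ≤ N') (hl : Descending N l) :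
    Descending N' l := by
  cases l with
  | nil => trivial
  | cons q l => exact ⟨hl.1.trans h, hl.2⟩

lemma Descending.snd_le : ∀ {l : List (ι × ℤ)} {N : ℤ}, Descending N l → ∀ q ∈ l, q.2 ≤ N
  | q :: _, _, ⟨hq, hl⟩, r, hr => by
    rcases List.mem_cons.1 hr with rfl | hr
    · exact hq
    · exact (hl.snd_le r hr).trans hq

lemma Descending.exists_split {m : ℤ} : ∀ {l : List (ι × ℤ)}, Descending m l →
    ∃ l₁ l₂, l = l₁ ++ l₂ ∧ (∀ q ∈ l₁, q.2 = m) ∧ ∀ q ∈ l₂, q.2 < m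
  | [], _ => ⟨[], [], rfl, by simp, by simp⟩
  | q :: l, ⟨hq, hl⟩ => by
    rcases hq.lt_or_eq with hlt | heq
    · exact ⟨[], q :: l, rfl, by simp,
        fun r hr => ((show Descending q.2 (q :: l) from ⟨le_rfl, hl⟩).snd_le r hr).trans_lt hlt⟩
    · obtain ⟨l₁, l₂, rfl, h₁, h₂⟩ := (heq ▸ hl : Descending m l).exists_split
      exact ⟨q :: l₁, l₂, rfl, by simpa [heq] using h₁, h₂⟩

end Words

lemma map_mem_adjoin_of_antimul {R B C : Type*} [CommRing R] [Ring B] [Ring C] [Algebra R B]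
    [Algebra R C] {S : Set B} {T : Set C} (f : B →ₗ[R] C) (h_one : f 1 = 1)
    (h_mul : ∀ x y, f (x * y) = f y * f x)
    (h : ∀ s ∈ S, f s ∈ Algebra.adjoin R T) {x : B} (hx : x ∈ Algebra.adjoin R S) :
    f x ∈ Algebra.adjoin R T := by
  induction hx using Algebra.adjoin_induction with
  | mem s hs => exact h s hs
  | algebraMap r =>
    rw [Algebra.algebraMap_eq_smul_one, map_smul, h_one]
    exact Subalgebra.smul_mem _ (one_mem _) r
  | add a b _ _ ha hb => rw [map_add]; exact add_mem ha hb
  | mul a b _ _ ha hb => rw [h_mul]; exact mul_mem hb ha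

variable (A : GCM I)

def word (l : List (I × ℤ)) : hA A := (l.map fun p => ff A p.1 p.2).prod

@[simp] lemma word_nil : word A [] = 1 := rfl

@[simp] lemma word_cons (p : I × ℤ) (l : List (I × ℤ)) :
    word A (p :: l) = ff A p.1 p.2 * word A l := List.prod_cons

lemma word_append (l₁ l₂ : List (I × ℤ)) : word A (l₁ ++ l₂) = word A l₁ * word A l₂ := by
  simp [word]

lemma ff_mul_ff_of_lt {i j : I} {p m : ℤ} (h : p < m) :
    ff A j p * ff A i m = qh ^ (((m - p + 1).negOnePow : ℤ) * (A.d j * A.c j i)) •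
        (ff A i m * ff A j p)
      + if i = j ∧ m = p + 1 then (1 - qd A j ^ 2) • (1 : hA A) else 0 := by
  simpa [ff, apply_ite (RingQuot.mkAlgHom 𝕂 (hARel A))] using
    RingQuot.mkAlgHom_rel 𝕂 (hARel.comm (A := A) j i p m h)

lemma word_mem_hAwt (l : List (I × ℤ)) : word A l ∈ hAwt A (wordWt l) :=
  Submodule.subset_span ⟨l, rfl, rfl⟩

lemma ff_mem_hAwt (i : I) (p : ℤ) : ff A i p ∈ hAwt A (letterWt (i, p)) := by
  simpa using word_mem_hAwt A [(i, p)]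

def descSpan (N : ℤ) (β : I →₀ ℤ) : Submodule 𝕂 (hA A) :=
  Submodule.span 𝕂 {x | ∃ l, Descending N l ∧ wordWt l = β ∧ x = word A l}

variable {A}

lemma word_mem {S : Subalgebra 𝕂 (hA A)} {l : List (I × ℤ)} (h : ∀ q ∈ l, ff A q.1 q.2 ∈ S) :
    word A l ∈ S :=
  list_prod_mem (List.forall_mem_map.2 h)

lemma mem_span_range_word (x : hA A) : x ∈ Submodule.span 𝕂 (Set.range (word A)) := by
  obtain ⟨z, rfl⟩ := RingQuot.mkAlgHom_surjective 𝕂 (hARel A) x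
  induction z using FreeAlgebra.induction with
  | grade0 r =>
    rw [AlgHom.commutes, Algebra.algebraMap_eq_smul_one]
    exact Submodule.smul_mem _ _ (Submodule.subset_span ⟨[], rfl⟩)
  | grade1 p => exact Submodule.subset_span ⟨[p], by simp [ff]⟩
  | mul a b ha hb =>
    rw [map_mul]
    have hab := Submodule.mul_mem_mul ha hb
    rw [Submodule.span_mul_span] at hab
    refine Submodule.span_le.2 ?_ hab
    rintro _ ⟨_, ⟨l₁, rfl⟩, _, ⟨l₂, rfl⟩, rfl⟩
    exact Submodule.subset_span ⟨l₁ ++ l₂, word_append A l₁ l₂⟩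
  | add a b ha hb => rw [map_add]; exact add_mem ha hb

lemma mul_mem_hAwt {β γ : I →₀ ℤ} {x y : hA A} (hx : x ∈ hAwt A β) (hy : y ∈ hAwt A γ) :
    x * y ∈ hAwt A (β + γ) := by
  have hwords : ∀ l₁ l₂, wordWt l₁ = β → wordWt l₂ = γ →
      word A l₁ * word A l₂ ∈ hAwt A (β + γ) := by
    rintro l₁ l₂ rfl rfl
    simpa [word_append, wordWt] using word_mem_hAwt A (l₁ ++ l₂)
  refine (Submodule.span_le (p := (hAwt A (β + γ)).comap (LinearMap.mulRight 𝕂 y))).2 ?_ hx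
  rintro _ ⟨l₁, hl₁, rfl⟩
  refine (Submodule.span_le (p := (hAwt A (β + γ)).comap (LinearMap.mulLeft 𝕂 _))).2 ?_ hy
  rintro _ ⟨l₂, hl₂, rfl⟩
  exact hwords l₁ l₂ hl₁ hl₂

lemma descSpan_mono {N N' : ℤ} (h : N ≤ N') (β : I →₀ ℤ) : descSpan A N β ≤ descSpan A N' β :=
  Submodule.span_mono fun _ ⟨l, hl, hβ, hx⟩ => ⟨l, hl.mono h, hβ, hx⟩

lemma ff_mul_mem_descSpan_of_le {i : I} {m N : ℤ} (hmN : m ≤ N) {β : I →₀ ℤ} {x : hA A}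
    (hx : x ∈ descSpan A m β) : ff A i m * x ∈ descSpan A N (letterWt (i, m) + β) := by
  refine (Submodule.span_le (p := (descSpan A N _).comap (LinearMap.mulLeft 𝕂 _))).2 ?_ hx
  rintro _ ⟨l, hl, rfl, rfl⟩
  exact Submodule.subset_span ⟨(i, m) :: l, ⟨hmN, hl⟩, by simp, by simp⟩

lemma ff_mul_word_mem_descSpan : ∀ (l : List (I × ℤ)) (j : I) (p N : ℤ), p ≤ N →
    Descending N l → ff A j p * word A l ∈ descSpan A N (letterWt (j, p) + wordWt l)
  | [], j, p, _, hpN, _ =>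
    Submodule.subset_span ⟨[(j, p)], ⟨hpN, trivial⟩, by simp, by simp⟩
  | (i, m) :: l, j, p, N, hpN, ⟨hmN, hl⟩ => by
    rcases le_or_gt m p with hmp | hpm
    · exact Submodule.subset_span ⟨(j, p) :: (i, m) :: l, ⟨hpN, hmp, hl⟩, by simp, by simp⟩
    rw [word_cons, ← mul_assoc, ff_mul_ff_of_lt A hpm, add_mul, smul_mul_assoc, mul_assoc,
      ite_mul, smul_mul_assoc, one_mul, zero_mul]
    refine add_mem (Submodule.smul_mem _ _ ?_) ?_
    · have h := ff_mul_mem_descSpan_of_le (i := i) hmN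
        (ff_mul_word_mem_descSpan l j p m hpm.le hl)
      simpa only [wordWt_cons, add_left_comm] using h
    · split_ifs with hc
      · obtain ⟨rfl, rfl⟩ := hc
        rw [wordWt_cons, ← add_assoc, letterWt_add_one, add_neg_cancel, zero_add]
        exact Submodule.smul_mem _ _
          (descSpan_mono hmN _ (Submodule.subset_span ⟨l, hl, rfl, rfl⟩))
      · exact zero_mem _

lemma ff_mul_mem_descSpan (j : I) {p N : ℤ} (hpN : p ≤ N) {β : I →₀ ℤ} {x : hA A}
    (hx : x ∈ descSpan A N β) : ff A j p * x ∈ descSpan A N (letterWt (j, p) + β) := by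
  refine (Submodule.span_le (p := (descSpan A N _).comap (LinearMap.mulLeft 𝕂 _))).2 ?_ hx
  rintro _ ⟨l, hl, rfl, rfl⟩
  exact ff_mul_word_mem_descSpan l j p N hpN hl

lemma word_mem_descSpan : ∀ l : List (I × ℤ), ∃ N, word A l ∈ descSpan A N (wordWt l)
  | [] => ⟨0, Submodule.subset_span ⟨[], trivial, rfl, rfl⟩⟩
  | q :: l => by
    obtain ⟨N, h⟩ := word_mem_descSpan l
    refine ⟨max q.2 N, ?_⟩
    rw [word_cons, wordWt_cons]
    exact ff_mul_mem_descSpan q.1 (le_max_left _ _) (descSpan_mono (le_max_right _ _) _ h)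

variable (A) in
structure IsConstTerm (M : hA A →ₗ[𝕂] 𝕂) : Prop where
  map_one : M 1 = 1
  map_mul_mul : ∀ (m : ℤ) (β : I →₀ ℤ), β ≠ 0 → ∀ y ∈ hAk A m, y ∈ hAwt A β →
    ∀ u ∈ hAgt A m, ∀ v ∈ hAlt A m, M (u * y * v) = 0

namespace IsConstTerm

variable {M M' : hA A →ₗ[𝕂] 𝕂}

lemma map_word_eq_zero (hM : IsConstTerm A M) {N : ℤ} {l : List (I × ℤ)}
    (hl : Descending N l) (hne : l ≠ []) : M (word A l) = 0 := by
  obtain ⟨⟨i, m⟩, t, rfl⟩ := List.exists_cons_of_ne_nil hne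
  obtain ⟨l₁, l₂, rfl, h₁, h₂⟩ := hl.2.exists_split
  have hlevel : ∀ q ∈ (i, m) :: l₁, q.2 = m := by simpa using h₁
  have hy : word A ((i, m) :: l₁) ∈ hAk A m :=
    word_mem fun q hq =>
      Algebra.subset_adjoin ⟨q.1, q.2, (hlevel q hq).ge, (hlevel q hq).le, rfl⟩
  have hv : word A l₂ ∈ hAlt A m :=
    word_mem fun q hq => Algebra.subset_adjoin ⟨q.1, q.2, by linarith [h₂ q hq], rfl⟩
  have h := hM.map_mul_mul m _ (wordWt_ne_zero_of_forall_snd_eq (List.cons_ne_nil _ _) hlevel)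
    _ hy (word_mem_hAwt A _) 1 (one_mem _) _ hv
  rwa [one_mul, ← word_append, List.cons_append] at h

lemma unique (hM : IsConstTerm A M) (hM' : IsConstTerm A M') : M = M' := by
  have hdesc : ∀ N β, Set.EqOn M M' (descSpan A N β) := by
    refine fun N β => LinearMap.eqOn_span' ?_
    rintro _ ⟨l, hl, -, rfl⟩
    rcases eq_or_ne l [] with rfl | hne
    · simp [hM.map_one, hM'.map_one]
    · rw [hM.map_word_eq_zero hl hne, hM'.map_word_eq_zero hl hne]
  have hword : Set.EqOn M M' (Set.range (word A)) := by
    rintro _ ⟨l, rfl⟩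
    obtain ⟨N, h⟩ := word_mem_descSpan (A := A) l
    exact hdesc N _ h
  exact LinearMap.ext fun x => LinearMap.eqOn_span' hword (mem_span_range_word x)

lemma map_eq_zero_of_mem_hAwt (hM : IsConstTerm A M) {β : I →₀ ℤ} (hβ : β ≠ 0) {x : hA A}
    (hx : x ∈ hAwt A β) : M x = 0 := by
  have hdesc : ∀ N, descSpan A N β ≤ LinearMap.ker M := fun N => by
    refine Submodule.span_le.2 ?_
    rintro _ ⟨l, hl, hlβ, rfl⟩
    exact hM.map_word_eq_zero hl (by rintro rfl; exact hβ hlβ.symm)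
  refine (Submodule.span_le (p := LinearMap.ker M)).2 ?_ hx
  rintro _ ⟨l, rfl, rfl⟩
  obtain ⟨N, h⟩ := word_mem_descSpan (A := A) l
  exact hdesc N h

end IsConstTerm

section Shift

variable {Dm : hA A ≃ₐ[𝕂] hA A}

lemma shift_mem_hAwt (hD : ∀ i p, Dm (ff A i p) = ff A i (p + 1)) {β : I →₀ ℤ} {x : hA A}
    (hx : x ∈ hAwt A β) : Dm x ∈ hAwt A (-β) := by
  have hword : ∀ l, Dm (word A l) ∈ hAwt A (-wordWt l) := by
    intro l
    induction l with
    | nil => simpa using word_mem_hAwt A []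
    | cons q l ih =>
      rw [word_cons, map_mul, hD, wordWt_cons, neg_add, ← letterWt_add_one]
      exact mul_mem_hAwt (ff_mem_hAwt A _ _) ih
  refine (Submodule.span_le (p := (hAwt A (-β)).comap Dm.toLinearMap)).2 ?_ hx
  rintro _ ⟨l, rfl, rfl⟩
  exact hword l

lemma shift_mem_hAband (hD : ∀ i p, Dm (ff A i p) = ff A i (p + 1)) {a b : ℤ} {y : hA A}
    (hy : y ∈ hAband A a b) : Dm y ∈ hAband A (a + 1) (b + 1) :=
  Algebra.adjoin_le (S := (hAband A (a + 1) (b + 1)).comap Dm.toAlgHom)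
    (by
      rintro _ ⟨i, k, h₁, h₂, rfl⟩
      exact Algebra.subset_adjoin ⟨i, k + 1, by omega, by omega, hD i k⟩) hy

lemma shift_mem_hAge (hD : ∀ i p, Dm (ff A i p) = ff A i (p + 1)) {a : ℤ} {y : hA A}
    (hy : y ∈ hAge A a) : Dm y ∈ hAge A (a + 1) :=
  Algebra.adjoin_le (S := (hAge A (a + 1)).comap Dm.toAlgHom)
    (by rintro _ ⟨i, k, h, rfl⟩; exact Algebra.subset_adjoin ⟨i, k + 1, by omega, hD i k⟩) hy

lemma shift_mem_hAle (hD : ∀ i p, Dm (ff A i p) = ff A i (p + 1)) {b : ℤ} {y : hA A}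
    (hy : y ∈ hAle A b) : Dm y ∈ hAle A (b + 1) :=
  Algebra.adjoin_le (S := (hAle A (b + 1)).comap Dm.toAlgHom)
    (by rintro _ ⟨i, k, h, rfl⟩; exact Algebra.subset_adjoin ⟨i, k + 1, by omega, hD i k⟩) hy

lemma IsConstTerm.comp_shift {M : hA A →ₗ[𝕂] 𝕂} (hM : IsConstTerm A M)
    (hD : ∀ i p, Dm (ff A i p) = ff A i (p + 1)) : IsConstTerm A (M ∘ₗ Dm.toLinearMap) where
  map_one := by simpa using hM.map_one
  map_mul_mul m β hβ y hy hyβ u hu v hv := by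
    have hv' : Dm v ∈ hAlt A (m + 1) := by
      simpa [hAlt] using shift_mem_hAle hD hv
    simpa using hM.map_mul_mul (m + 1) (-β) (neg_ne_zero.2 hβ) _ (shift_mem_hAband hD hy)
      (shift_mem_hAwt hD hyβ) _ (shift_mem_hAge hD hu) _ hv'

end Shift

section Star

variable (A) in
structure IsStar (st : hA A →ₗ[𝕂] hA A) : Prop where
  map_one : st 1 = 1
  map_mul_rev : ∀ x y, st (x * y) = st y * st x
  map_ff : ∀ i p, st (ff A i p) = ff A i (-p)

namespace IsStar

variable {st : hA A →ₗ[𝕂] hA A}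

lemma map_mem_hAwt (hst : IsStar A st) {β : I →₀ ℤ} {x : hA A} (hx : x ∈ hAwt A β) :
    st x ∈ hAwt A β := by
  have hword : ∀ l, st (word A l) ∈ hAwt A (wordWt l) := by
    intro l
    induction l with
    | nil => simpa [hst.map_one] using word_mem_hAwt A []
    | cons q l ih =>
      rw [word_cons, hst.map_mul_rev, hst.map_ff, wordWt_cons, add_comm, ← letterWt_neg]
      exact mul_mem_hAwt ih (ff_mem_hAwt A _ _)
  refine (Submodule.span_le (p := (hAwt A β).comap st)).2 ?_ hx
  rintro _ ⟨l, rfl, rfl⟩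
  exact hword l

lemma map_mem_hAband (hst : IsStar A st) {a b : ℤ} {y : hA A} (hy : y ∈ hAband A a b) :
    st y ∈ hAband A (-b) (-a) :=
  map_mem_adjoin_of_antimul st hst.map_one hst.map_mul_rev (by
    rintro _ ⟨i, k, h₁, h₂, rfl⟩
    exact hst.map_ff i k ▸ Algebra.subset_adjoin ⟨i, -k, by omega, by omega, rfl⟩) hy

lemma map_mem_hAle (hst : IsStar A st) {a : ℤ} {y : hA A} (hy : y ∈ hAge A a) :
    st y ∈ hAle A (-a) :=
  map_mem_adjoin_of_antimul st hst.map_one hst.map_mul_rev (by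
    rintro _ ⟨i, k, h, rfl⟩
    exact hst.map_ff i k ▸ Algebra.subset_adjoin ⟨i, -k, by omega, rfl⟩) hy

lemma map_mem_hAge (hst : IsStar A st) {b : ℤ} {y : hA A} (hy : y ∈ hAle A b) :
    st y ∈ hAge A (-b) :=
  map_mem_adjoin_of_antimul st hst.map_one hst.map_mul_rev (by
    rintro _ ⟨i, k, h, rfl⟩
    exact hst.map_ff i k ▸ Algebra.subset_adjoin ⟨i, -k, by omega, rfl⟩) hy

end IsStar

lemma IsStar.shift_star_shift {st : hA A →ₗ[𝕂] hA A} (hst : IsStar A st)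
    {Dm : hA A ≃ₐ[𝕂] hA A} (hD : ∀ i p, Dm (ff A i p) = ff A i (p + 1)) (x : hA A) :
    Dm (st (Dm x)) = st x := by
  have hword : ∀ l, Dm (st (Dm (word A l))) = st (word A l) := by
    intro l
    induction l with
    | nil => simp [hst.map_one]
    | cons q l ih =>
      calc Dm (st (Dm (word A (q :: l))))
          = Dm (st (Dm (word A l))) * Dm (st (Dm (ff A q.1 q.2))) := by
            rw [word_cons, map_mul Dm, hst.map_mul_rev, map_mul Dm]
        _ = st (word A l) * st (ff A q.1 q.2) := by
            rw [ih, hD, hst.map_ff, hD, hst.map_ff, show -(q.2 + 1) + 1 = -q.2 by ring]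
        _ = st (word A (q :: l)) := by rw [word_cons, hst.map_mul_rev]
  exact LinearMap.eqOn_span' (f := Dm.toLinearMap ∘ₗ st ∘ₗ Dm.toLinearMap) (g := st)
    (by rintro _ ⟨l, rfl⟩; exact hword l) (mem_span_range_word x)

lemma IsConstTerm.comp_star {M : hA A →ₗ[𝕂] 𝕂} (hM : IsConstTerm A M)
    {st : hA A →ₗ[𝕂] hA A} (hst : IsStar A st) : IsConstTerm A (M ∘ₗ st) where
  map_one := by simpa [hst.map_one] using hM.map_one
  map_mul_mul m β hβ y hy hyβ u hu v hv := by
    have hu' : st u ∈ hAlt A (-m) := by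
      rw [hAlt, show -m - 1 = -(m + 1) by ring]
      exact hst.map_mem_hAle hu
    have hv' : st v ∈ hAgt A (-m) := by
      rw [hAgt, show -m + 1 = -(m - 1) by ring]
      exact hst.map_mem_hAge hv
    rw [LinearMap.comp_apply, hst.map_mul_rev, hst.map_mul_rev, ← mul_assoc]
    exact hM.map_mul_mul (-m) β hβ _ (hst.map_mem_hAband hy) (hst.map_mem_hAwt hyβ) _ hv' _ hu'

end Star

end BosonicExtension

open BosonicExtension

/-- `M(x^⋆) = M(𝒟̄(x)) = M(x)`; consequently the form
`⟨⟨x,y⟩⟩ = M(x 𝒟̄(y))` satisfies `⟨⟨x,y⟩⟩ = ⟨⟨𝒟̄x, 𝒟̄y⟩⟩ = ⟨⟨y^⋆, x^⋆⟩⟩`, and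
`⟨⟨x,y⟩⟩ = 0` for homogeneous `x, y` of different weights.
`M` is the projection characterized as before, `Dm` is the algebra automorphism `𝒟̄` with
`f_{i,p} ↦ f_{i,p+1}`, and `st` is the anti-automorphism `⋆` with `f_{i,p} ↦ f_{i,-p}`. -/
theorem statement12 (A : GCM I)
    (M : hA A →ₗ[𝕂] 𝕂)
    (hMone : M 1 = 1)
    (hMzero : ∀ (m : ℤ) (β : I →₀ ℤ), β ≠ 0 → ∀ y, y ∈ hAk A m → y ∈ hAwt A β →
      ∀ u ∈ hAgt A m, ∀ v ∈ hAlt A m, M (u * y * v) = 0)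
    (Dm : hA A ≃ₐ[𝕂] hA A)
    (hD : ∀ i p, Dm (ff A i p) = ff A i (p + 1))
    (st : hA A →ₗ[𝕂] hA A)
    (hstone : st 1 = 1)
    (hstmul : ∀ x y, st (x * y) = st y * st x)
    (hstf : ∀ i p, st (ff A i p) = ff A i (-p)) :
    (∀ x : hA A, M (st x) = M x ∧ M (Dm x) = M x) ∧
    (∀ x y : hA A,
      M (x * Dm y) = M (Dm x * Dm (Dm y)) ∧
      M (x * Dm y) = M (st y * Dm (st x))) ∧
    (∀ (β γ : I →₀ ℤ) (x y : hA A), β ≠ γ → x ∈ hAwt A β → y ∈ hAwt A γ →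
      M (x * Dm y) = 0) := by
  have hM : IsConstTerm A M := ⟨hMone, hMzero⟩
  have hst : IsStar A st := ⟨hstone, hstmul, hstf⟩
  have hMst : ∀ x, M (st x) = M x := LinearMap.congr_fun ((hM.comp_star hst).unique hM)
  have hMD : ∀ x, M (Dm x) = M x := LinearMap.congr_fun ((hM.comp_shift hD).unique hM)
  refine ⟨fun x => ⟨hMst x, hMD x⟩, fun x y => ⟨?_, ?_⟩, ?_⟩
  · rw [← map_mul, hMD]
  · calc M (x * Dm y) = M (st (Dm y) * st x) := by rw [← hstmul, hMst]
      _ = M (Dm (st (Dm y)) * Dm (st x)) := by rw [← map_mul Dm, hMD]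
      _ = M (st y * Dm (st x)) := by rw [hst.shift_star_shift hD]
  · intro β γ x y hβγ hx hy
    refine hM.map_eq_zero_of_mem_hAwt (sub_ne_zero.2 hβγ) ?_
    simpa [sub_eq_add_neg] using mul_mem_hAwt hx (shift_mem_hAwt hD hy)

end
end

section
/- For any i ∈ I, m ∈ Z and x, y ∈ Â, one has ⟨⟨f_{i,m}·x, y⟩⟩ = ⟨⟨x, y·f_{i,m+1}⟩⟩ and ⟨⟨x·f_{i,m}, y⟩⟩ = ⟨⟨x, f_{i,m−1}·y⟩⟩. Moreover, for x, y ∈ Â_{≤m} one has ⟨⟨f_{i,m}x, y⟩⟩ = ⟨⟨x, E_{i,m}(y)⟩⟩, and for u, v ∈ Â_{≥m} one has ⟨⟨u, v f_{i,m}⟩⟩ = ⟨⟨E*_{i,m}(u), v⟩⟩. -/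
/- Common setting: a symmetrizable generalized Cartan matrix, the field
`𝕂 = ℚ(q^{1/2})` (with `sqv = q^{1/2}` and `q = qh = sqv²`), quantum integers, the bosonic
extension `hA A` presented by the `q`-Serre relations and the bosonic commutation
relations, its weight spaces and distinguished subalgebras, and the root-lattice
pairing. -/

set_option maxHeartbeats 1000000
set_option synthInstance.maxHeartbeats 400000

noncomputable section

variable {I : Type} [DecidableEq I]

/-- `E_{i,m}(x) = [x, f_{i,m+1}]_q` for homogeneous `x` of weight `β`
(note `wt (f_{i,m+1}) = α_{i,m}`). -/
def Ebr (A : GCM I) (i : I) (m : ℤ) (β : I →₀ ℤ) (x : hA A) : hA A :=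
  x * ff A i (m + 1) - qh ^ (-(ip A β (aim i m))) • (ff A i (m + 1) * x)

/-- `E*_{i,m}(x) = [f_{i,m-1}, x]_q` for homogeneous `x` of weight `β`
(note `wt (f_{i,m-1}) = α_{i,m}`). -/
def Esbr (A : GCM I) (i : I) (m : ℤ) (β : I →₀ ℤ) (x : hA A) : hA A :=
  ff A i (m - 1) * x - qh ^ (-(ip A (aim i m) β)) • (x * ff A i (m - 1))

namespace S14

variable {I : Type} [DecidableEq I]

/-- product of the word `l` -/
def wp (A : GCM I) (l : List (I × ℤ)) : hA A := (l.map fun p => ff A p.1 p.2).prod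

/-- sorted (weakly decreasing bands) -/
def Sorted (l : List (I × ℤ)) : Prop := l.Pairwise (fun a b => b.2 ≤ a.2)

variable (A : GCM I)

@[simp] lemma wp_nil : wp A [] = 1 := rfl

@[simp] lemma wp_cons (a : I × ℤ) (l : List (I × ℤ)) :
    wp A (a :: l) = ff A a.1 a.2 * wp A l := by
  simp [wp]

lemma wp_append (l₁ l₂ : List (I × ℤ)) : wp A (l₁ ++ l₂) = wp A l₁ * wp A l₂ := by
  simp [wp]

@[simp] lemma wp_single (a : I × ℤ) : wp A [a] = ff A a.1 a.2 := by
  simp [wp]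

/-- The fundamental commutation relation in `hA`. -/
lemma rel (i j : I) (m p : ℤ) (h : m < p) :
    ff A i m * ff A j p =
      (qh ^ (((p - m + 1).negOnePow : ℤ) * (A.d i * A.c i j))) • (ff A j p * ff A i m)
        + (if j = i ∧ p = m + 1 then ((1 : 𝕂) - qd A i ^ 2) • (1 : hA A) else 0) := by
  have h1 := RingQuot.mkAlgHom_rel 𝕂 (hARel.comm (A := A) i j m p h)
  simp only [map_add, map_mul, map_smul, apply_ite (RingQuot.mkAlgHom 𝕂 (hARel A)),
    map_one, map_zero] at h1
  simpa only [ff] using h1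

/-- Commutation with no delta term. -/
lemma rel_nd (i j : I) (m p : ℤ) (h : m < p) (hnd : ¬(j = i ∧ p = m + 1)) :
    ff A i m * ff A j p =
      (qh ^ (((p - m + 1).negOnePow : ℤ) * (A.d i * A.c i j))) • (ff A j p * ff A i m) := by
  rw [rel A i j m p h, if_neg hnd, add_zero]

end S14
namespace S14
variable {I : Type} [DecidableEq I] (A : GCM I)

lemma wp_mem (S : Subalgebra 𝕂 (hA A)) :
    ∀ (l : List (I × ℤ)), (∀ x ∈ l, ff A x.1 x.2 ∈ S) → wp A l ∈ S := by
  intro l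
  induction l with
  | nil => intro _; simpa using S.one_mem
  | cons a t ih =>
    intro h
    rw [wp_cons]
    exact S.mul_mem (h a (by simp)) (ih fun x hx => h x (by simp [hx]))

lemma ff_mem_hAk (i : I) (m : ℤ) : ff A i m ∈ hAk A m :=
  Algebra.subset_adjoin ⟨i, m, le_refl _, le_refl _, rfl⟩

lemma ff_mem_hAle {k m : ℤ} (h : k ≤ m) (i : I) : ff A i k ∈ hAle A m :=
  Algebra.subset_adjoin ⟨i, k, h, rfl⟩

lemma ff_mem_hAge {k m : ℤ} (h : m ≤ k) (i : I) : ff A i k ∈ hAge A m :=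
  Algebra.subset_adjoin ⟨i, k, h, rfl⟩

/-- the formal weight of a word -/
def wtOf (l : List (I × ℤ)) : I →₀ ℤ :=
  (l.map fun p => Finsupp.single p.1 (((p.2 + 1).negOnePow : ℤ))).sum

lemma wp_mem_wt (l : List (I × ℤ)) : wp A l ∈ hAwt A (wtOf l) :=
  Submodule.subset_span ⟨l, rfl, rfl⟩

lemma wtOf_band_apply (t : ℤ) (j : I) :
    ∀ (l : List (I × ℤ)), (∀ x ∈ l, x.2 = t) →
      wtOf l j = (l.countP fun p => p.1 = j) * ((t + 1).negOnePow : ℤ) := by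
  intro l
  induction l with
  | nil => intro _; simp [wtOf]
  | cons a l ih =>
    intro h
    have ha : a.2 = t := h a (by simp)
    have ih' := ih (fun x hx => h x (by simp [hx]))
    rw [wtOf, List.map_cons, List.sum_cons] at *
    rw [Finsupp.add_apply, ih', ha, List.countP_cons, Finsupp.single_apply]
    by_cases hj : a.1 = j
    · simp [hj]; ring
    · simp [hj]

lemma wtOf_ne_zero (t : ℤ) (a : I × ℤ) (l : List (I × ℤ))
    (h : ∀ x ∈ a :: l, x.2 = t) : wtOf (a :: l) ≠ 0 := by
  intro h0
  have := wtOf_band_apply t a.1 (a :: l) h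
  rw [h0] at this
  simp only [Finsupp.coe_zero, Pi.zero_apply] at this
  have hpos : 0 < (a :: l).countP fun p => p.1 = a.1 := by
    rw [List.countP_pos_iff]
    exact ⟨a, by simp⟩
  have hne : ((t + 1).negOnePow : ℤ) ≠ 0 := Units.ne_zero _
  rcases mul_eq_zero.1 this.symm with h' | h'
  · omega
  · exact hne h'

lemma split_band (t : ℤ) :
    ∀ (w : List (I × ℤ)), (∀ x ∈ w, x.2 ≤ t) → Sorted w →
      ∃ y v, w = y ++ v ∧ (∀ x ∈ y, x.2 = t) ∧ (∀ x ∈ v, x.2 ≤ t - 1) := by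
  intro w
  induction w with
  | nil => intro _ _; exact ⟨[], [], by simp, by simp, by simp⟩
  | cons a w' ih =>
    intro hle hs
    rw [Sorted, List.pairwise_cons] at hs
    by_cases ha : a.2 = t
    · obtain ⟨y, v, hw, hy, hv⟩ := ih (fun x hx => hle x (by simp [hx])) hs.2
      refine ⟨a :: y, v, by simp [hw], ?_, hv⟩
      intro x hx
      rcases List.mem_cons.1 hx with rfl | hx
      · exact ha
      · exact hy x hx
    · refine ⟨[], a :: w', by simp, by simp, ?_⟩
      have hat : a.2 ≤ t - 1 := by have := hle a (by simp); omega
      intro x hx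
      rcases List.mem_cons.1 hx with rfl | hx
      · exact hat
      · have := hs.1 x hx; omega

end S14
set_option linter.unusedSectionVars false

namespace S14
variable {I : Type} [DecidableEq I] (A : GCM I)

section Mlemmas

variable (M : hA A →ₗ[𝕂] 𝕂)
variable (hMzero : ∀ (m : ℤ) (β : I →₀ ℤ), β ≠ 0 → ∀ y, y ∈ hAk A m → y ∈ hAwt A β →
      ∀ u ∈ hAgt A m, ∀ v ∈ hAlt A m, M (u * y * v) = 0)

include hMzero

/-- M vanishes on nonempty sorted words. -/
lemma M_wp_sorted : ∀ (l : List (I × ℤ)), Sorted l → l ≠ [] → M (wp A l) = 0 := by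
  rintro (_ | ⟨a, l'⟩) hs hne
  · exact absurd rfl hne
  rw [Sorted, List.pairwise_cons] at hs
  obtain ⟨y, v, hw, hy, hv⟩ := split_band a.2 l' (fun x hx => hs.1 x hx) hs.2
  have hya : ∀ x ∈ a :: y, x.2 = a.2 := by
    intro x hx
    rcases List.mem_cons.1 hx with rfl | hx
    · rfl
    · exact hy x hx
  have hmem_k : wp A (a :: y) ∈ hAk A a.2 := by
    apply wp_mem
    intro x hx
    have := hya x hx
    exact this ▸ ff_mem_hAk A x.1 x.2
  have hmem_v : wp A v ∈ hAlt A a.2 := by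
    apply wp_mem
    intro x hx
    exact ff_mem_hAle A (hv x hx) x.1
  have h0 := hMzero a.2 (wtOf (a :: y)) (wtOf_ne_zero a.2 a y hya) (wp A (a :: y)) hmem_k
    (wp_mem_wt A (a :: y)) 1 ((hAgt A a.2).one_mem) (wp A v) hmem_v
  rw [one_mul] at h0
  have : wp A (a :: l') = wp A (a :: y) * wp A v := by
    rw [hw, ← wp_append, List.cons_append]
  rw [this]; exact h0

end Mlemmas
end S14
namespace S14
variable {I : Type} [DecidableEq I] (A : GCM I)

section Mlemmas2

variable (M : hA A →ₗ[𝕂] 𝕂)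
variable (hMone : M 1 = 1)
variable (hMzero : ∀ (m : ℤ) (β : I →₀ ℤ), β ≠ 0 → ∀ y, y ∈ hAk A m → y ∈ hAwt A β →
      ∀ u ∈ hAgt A m, ∀ v ∈ hAlt A m, M (u * y * v) = 0)

include hMone hMzero

lemma claimC (i : I) (m : ℤ) :
    ∀ (w u : List (I × ℤ)), Sorted (u ++ w) → (∀ x ∈ u, m < x.2) →
      M (wp A u * ff A i m * wp A w) =
        if u = [] ∧ w = [(i, m + 1)] then zi A i else 0 := by
  intro w
  induction w with
  | nil =>
    intro u hs hu
    rw [if_neg (by simp)]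
    have hsort : Sorted (u ++ [(i, m)]) := by
      rw [Sorted, List.pairwise_append]
      rw [List.append_nil] at hs
      refine ⟨hs, by simp, ?_⟩
      intro a ha b hb
      rw [List.mem_singleton] at hb
      subst hb
      exact le_of_lt (hu a ha)
    have := M_wp_sorted A M hMzero (u ++ [(i, m)]) hsort (by simp)
    rw [wp_append, wp_single] at this
    rw [wp_nil, mul_one]
    exact this
  | cons jp w' ih =>
    intro u hs hu
    obtain ⟨j, p⟩ := jp
    by_cases hp : p ≤ m
    · -- insert f_{i,m} in sorted position; whole word sorted, nonempty ⇒ 0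
      have hcond : ¬(u = [] ∧ (j, p) :: w' = [(i, m + 1)]) := by
        rintro ⟨-, h⟩
        rw [List.cons_eq_cons] at h
        have h1 := h.1
        simp only [Prod.mk.injEq] at h1
        omega
      rw [if_neg hcond]
      have hwle : ∀ x ∈ (j, p) :: w', x.2 ≤ m := by
        have hsw : Sorted ((j, p) :: w') :=
          (List.pairwise_append.1 hs).2.1
        rw [Sorted, List.pairwise_cons] at hsw
        intro x hx
        rcases List.mem_cons.1 hx with rfl | hx
        · exact hp
        · have := hsw.1 x hx; omega
      have hsort : Sorted (u ++ (i, m) :: (j, p) :: w') := by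
        rw [Sorted, List.pairwise_append] at hs ⊢
        refine ⟨hs.1, ?_, ?_⟩
        · rw [List.pairwise_cons]
          exact ⟨fun x hx => hwle x hx, hs.2.1⟩
        · intro a ha b hb
          rcases List.mem_cons.1 hb with rfl | hb
          · exact le_of_lt (hu a ha)
          · exact hs.2.2 a ha b hb
      have := M_wp_sorted A M hMzero _ hsort (by simp)
      rw [wp_append, wp_cons] at this
      rw [← this]
      congr 1
      noncomm_ring
    · push_neg at hp
      set c : 𝕂 := qh ^ (((p - m + 1).negOnePow : ℤ) * (A.d i * A.c i j)) with hc
      -- the two building blocks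
      have hT1 : M (wp A (u ++ [(j, p)]) * ff A i m * wp A w') = 0 := by
        rw [ih (u ++ [(j, p)]) (by rw [List.append_assoc]; exact hs)
          (by intro x hx; rcases List.mem_append.1 hx with hx | hx
              · exact hu x hx
              · rw [List.mem_singleton] at hx; subst hx; exact hp)]
        rw [if_neg (by simp)]
      have hsub : Sorted (u ++ w') := by
        refine List.Pairwise.sublist ?_ hs
        exact List.Sublist.append_left (List.sublist_cons_self _ _) u
      by_cases hδ : j = i ∧ p = m + 1
      · obtain ⟨rfl, rfl⟩ := hδ
        have hrel := rel A j j m (m + 1) (by omega)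
        rw [if_pos ⟨rfl, rfl⟩] at hrel
        have expand : wp A u * ff A j m * wp A ((j, m + 1) :: w') =
            c • (wp A (u ++ [(j, m + 1)]) * ff A j m * wp A w')
              + ((1 : 𝕂) - qd A j ^ 2) • wp A (u ++ w') := by
          rw [wp_cons, wp_append, wp_single, wp_append]
          calc wp A u * ff A j m * (ff A j (m + 1) * wp A w')
              = wp A u * (ff A j m * ff A j (m + 1)) * wp A w' := by noncomm_ring
            _ = wp A u * (c • (ff A j (m + 1) * ff A j m)
                  + ((1 : 𝕂) - qd A j ^ 2) • (1 : hA A)) * wp A w' := by rw [← hrel]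
            _ = _ := by
                rw [mul_add, add_mul]
                congr 1
                · rw [mul_smul_comm, smul_mul_assoc]; congr 1; noncomm_ring
                · rw [mul_smul_comm, smul_mul_assoc, mul_one]
        rw [expand, map_add, map_smul, map_smul, hT1, smul_zero, zero_add]
        by_cases hu0 : u = [] ∧ w' = []
        · obtain ⟨rfl, rfl⟩ := hu0
          rw [if_pos ⟨rfl, rfl⟩]
          simp only [List.nil_append, wp_nil, hMone]
          rw [zi]
          simp
        · have hne : u ++ w' ≠ [] := by
            intro h
            rcases List.append_eq_nil_iff.1 h with ⟨h1, h2⟩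
            exact hu0 ⟨h1, h2⟩
          rw [M_wp_sorted A M hMzero _ hsub hne, smul_zero]
          rw [if_neg]
          rintro ⟨rfl, hw⟩
          rw [List.cons_eq_cons] at hw
          exact hne (by rw [List.nil_append, hw.2])
      · have hrel := rel_nd A i j m p hp hδ
        have expand : wp A u * ff A i m * wp A ((j, p) :: w') =
            c • (wp A (u ++ [(j, p)]) * ff A i m * wp A w') := by
          rw [wp_cons, wp_append, wp_single]
          calc wp A u * ff A i m * (ff A j p * wp A w')
              = wp A u * (ff A i m * ff A j p) * wp A w' := by noncomm_ring
            _ = wp A u * (c • (ff A j p * ff A i m)) * wp A w' := by rw [← hrel]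
            _ = _ := by
                rw [mul_smul_comm, smul_mul_assoc]; congr 1; noncomm_ring
        rw [expand, map_smul, hT1, smul_zero]
        rw [if_neg]
        rintro ⟨-, hw⟩
        rw [List.cons_eq_cons] at hw
        have := hw.1
        simp only [Prod.mk.injEq] at this
        exact hδ ⟨this.1, this.2⟩

end Mlemmas2
end S14
namespace S14
variable {I : Type} [DecidableEq I] (A : GCM I)

section Mlemmas3

variable (M : hA A →ₗ[𝕂] 𝕂)
variable (hMone : M 1 = 1)
variable (hMzero : ∀ (m : ℤ) (β : I →₀ ℤ), β ≠ 0 → ∀ y, y ∈ hAk A m → y ∈ hAwt A β →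
      ∀ u ∈ hAgt A m, ∀ v ∈ hAlt A m, M (u * y * v) = 0)

include hMone hMzero

lemma claimD (i : I) (m : ℤ) :
    ∀ (w u : List (I × ℤ)), Sorted (w ++ u) → (∀ x ∈ u, x.2 < m + 2) →
      M (wp A w * ff A i (m + 2) * wp A u) =
        if w = [(i, m + 1)] ∧ u = [] then zi A i else 0 := by
  intro w
  induction w using List.reverseRecOn with
  | nil =>
    intro u hs hu
    rw [if_neg (by simp)]
    have hsort : Sorted ((i, m + 2) :: u) := by
      rw [Sorted, List.pairwise_cons]
      exact ⟨fun x hx => le_of_lt (hu x hx), hs⟩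
    have := M_wp_sorted A M hMzero _ hsort (by simp)
    rw [wp_cons] at this
    rw [wp_nil, one_mul]
    exact this
  | append_singleton w' jp ih =>
    intro u hs hu
    obtain ⟨j, p⟩ := jp
    by_cases hp : m + 2 ≤ p
    · have hcond : ¬(w' ++ [(j, p)] = [(i, m + 1)] ∧ u = []) := by
        rintro ⟨h, -⟩
        rcases List.append_eq_cons_iff.1 h with ⟨h1, h2⟩ | ⟨a, h1, h2⟩
        · simp only [List.cons_eq_cons, Prod.mk.injEq] at h2
          omega
        · simp at h2
      rw [if_neg hcond]
      have hw'p : ∀ x ∈ w', p ≤ x.2 := by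
        have := (List.pairwise_append.1 hs).1
        rw [List.pairwise_append] at this
        intro x hx
        exact this.2.2 x hx (j, p) (by simp)
      have hsort : Sorted ((w' ++ [(j, p)]) ++ (i, m + 2) :: u) := by
        rw [Sorted, List.pairwise_append]
        refine ⟨(List.pairwise_append.1 hs).1, ?_, ?_⟩
        · rw [List.pairwise_cons]
          exact ⟨fun x hx => le_of_lt (hu x hx), (List.pairwise_append.1 hs).2.1⟩
        · intro a ha b hb
          rcases List.mem_cons.1 hb with rfl | hb
          · rcases List.mem_append.1 ha with ha | ha
            · have := hw'p a ha; omega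
            · rw [List.mem_singleton] at ha; subst ha; omega
          · exact (List.pairwise_append.1 hs).2.2 a ha b hb
      have := M_wp_sorted A M hMzero _ hsort (by simp)
      rw [wp_append, wp_cons] at this
      rw [← this]
      congr 1
      noncomm_ring
    · push_neg at hp
      set c : 𝕂 := qh ^ ((((m + 2) - p + 1).negOnePow : ℤ) * (A.d j * A.c j i)) with hc
      have he : (w' ++ [(j, p)]) ++ u = w' ++ (j, p) :: u := by simp
      rw [he] at hs
      have hT1 : M (wp A w' * ff A i (m + 2) * wp A ((j, p) :: u)) = 0 := by
        rw [ih ((j, p) :: u) hs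
          (by intro x hx; rcases List.mem_cons.1 hx with rfl | hx
              · exact hp
              · exact hu x hx)]
        rw [if_neg (by rintro ⟨-, h⟩; exact List.cons_ne_nil _ _ h)]
      have hsub : Sorted (w' ++ u) :=
        List.Pairwise.sublist
          (List.Sublist.append_left (List.sublist_cons_self _ _) w') hs
      by_cases hδ : i = j ∧ m + 2 = p + 1
      · obtain ⟨rfl, hδ2⟩ := hδ
        have hp3 : p = m + 1 := by omega
        subst hp3
        have hrel := rel A i i (m + 1) (m + 2) (by omega)
        rw [if_pos ⟨rfl, by omega⟩] at hrel
        have expand : wp A (w' ++ [(i, m + 1)]) * ff A i (m + 2) * wp A u =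
            c • (wp A w' * ff A i (m + 2) * wp A ((i, m + 1) :: u))
              + ((1 : 𝕂) - qd A i ^ 2) • wp A (w' ++ u) := by
          rw [wp_append, wp_single, wp_cons, wp_append]
          calc wp A w' * ff A i (m + 1) * ff A i (m + 2) * wp A u
              = wp A w' * (ff A i (m + 1) * ff A i (m + 2)) * wp A u := by noncomm_ring
            _ = wp A w' * (c • (ff A i (m + 2) * ff A i (m + 1))
                  + ((1 : 𝕂) - qd A i ^ 2) • (1 : hA A)) * wp A u := by rw [← hrel]
            _ = _ := by
                rw [mul_add, add_mul]
                congr 1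
                · rw [mul_smul_comm, smul_mul_assoc]; congr 1; noncomm_ring
                · rw [mul_smul_comm, smul_mul_assoc, mul_one]
        rw [expand, map_add, map_smul, map_smul, hT1, smul_zero, zero_add]
        by_cases hu0 : w' = [] ∧ u = []
        · obtain ⟨rfl, rfl⟩ := hu0
          rw [if_pos ⟨by simp, rfl⟩]
          simp only [List.append_nil, wp_nil, hMone]
          rw [zi]
          simp
        · have hne : w' ++ u ≠ [] := by
            intro h
            rcases List.append_eq_nil_iff.1 h with ⟨h1, h2⟩
            exact hu0 ⟨h1, h2⟩
          rw [M_wp_sorted A M hMzero _ hsub hne, smul_zero]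
          rw [if_neg]
          rintro ⟨hw, rfl⟩
          rcases List.append_eq_cons_iff.1 hw with ⟨h1, -⟩ | ⟨a, -, h2⟩
          · exact hne (by simp [h1])
          · simp at h2
      · have hrel := rel_nd A j i p (m + 2) hp hδ
        have expand : wp A (w' ++ [(j, p)]) * ff A i (m + 2) * wp A u =
            c • (wp A w' * ff A i (m + 2) * wp A ((j, p) :: u)) := by
          rw [wp_append, wp_single, wp_cons]
          calc wp A w' * ff A j p * ff A i (m + 2) * wp A u
              = wp A w' * (ff A j p * ff A i (m + 2)) * wp A u := by noncomm_ring
            _ = wp A w' * (c • (ff A i (m + 2) * ff A j p)) * wp A u := by rw [← hrel]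
            _ = _ := by
                rw [mul_smul_comm, smul_mul_assoc]; congr 1; noncomm_ring
        rw [expand, map_smul, hT1, smul_zero]
        rw [if_neg]
        rintro ⟨hw, -⟩
        rcases List.append_eq_cons_iff.1 hw with ⟨-, h2⟩ | ⟨a, -, h2⟩
        · simp only [List.cons_eq_cons, Prod.mk.injEq] at h2
          exact hδ ⟨h2.1.1.symm, by omega⟩
        · simp at h2

end Mlemmas3
end S14
namespace S14
variable {I : Type} [DecidableEq I] (A : GCM I)

/-- span of sorted words with all bands `≤ B` -/
def VB (B : ℤ) : Submodule 𝕂 (hA A) :=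
  Submodule.span 𝕂 {x | ∃ w, Sorted w ∧ (∀ p ∈ w, p.2 ≤ B) ∧ x = wp A w}

/-- span of sorted words -/
def V : Submodule 𝕂 (hA A) :=
  Submodule.span 𝕂 {x | ∃ w, Sorted w ∧ x = wp A w}

lemma VB_le_V (B : ℤ) : VB A B ≤ V A :=
  Submodule.span_mono (fun x ⟨w, h1, _, h3⟩ => ⟨w, h1, h3⟩)

lemma straighten : ∀ (n : ℕ) (w : List (I × ℤ)), w.length ≤ n → ∀ (j : I) (p B : ℤ),
    Sorted w → (∀ x ∈ w, x.2 ≤ B) → p ≤ B → ff A j p * wp A w ∈ VB A B := by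
  intro n
  induction n with
  | zero =>
    intro w hw j p B _ _ hpB
    rw [Nat.le_zero, List.length_eq_zero_iff] at hw
    subst hw
    rw [wp_nil, mul_one]
    exact Submodule.subset_span ⟨[(j, p)], by simp [Sorted], by simpa using hpB, by simp⟩
  | succ n ihn =>
    rintro (_ | ⟨⟨k, t⟩, w'⟩) hw j p B hs hB hpB
    · rw [wp_nil, mul_one]
      exact Submodule.subset_span ⟨[(j, p)], by simp [Sorted], by simpa using hpB, by simp⟩
    · rw [Sorted, List.pairwise_cons] at hs
      by_cases htp : t ≤ p
      · refine Submodule.subset_span ⟨(j, p) :: (k, t) :: w', ?_, ?_, by simp [wp_cons]⟩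
        · rw [Sorted, List.pairwise_cons]
          refine ⟨?_, List.pairwise_cons.2 hs⟩
          intro x hx
          rcases List.mem_cons.1 hx with rfl | hx
          · exact htp
          · have := hs.1 x hx; simp only at this ⊢; omega
        · intro x hx
          rcases List.mem_cons.1 hx with rfl | hx
          · exact hpB
          · exact hB x hx
      · push_neg at htp
        have hrel := rel A j k p t htp
        have hw' : w'.length ≤ n := by simp at hw; omega
        have hBw' : ∀ x ∈ w', x.2 ≤ t := fun x hx => hs.1 x hx
        have hrec : ff A j p * wp A w' ∈ VB A t :=
          ihn w' hw' j p t hs.2 hBw' (le_of_lt htp)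
        have htB : t ≤ B := hB (k, t) (by simp)
        -- multiply by f_{k,t} on the left stays in VB A B
        have hmul : ∀ z ∈ VB A t, ff A k t * z ∈ VB A B := by
          intro z hz
          induction hz using Submodule.span_induction with
          | mem x hx =>
            obtain ⟨v, hv1, hv2, rfl⟩ := hx
            refine Submodule.subset_span ⟨(k, t) :: v, ?_, ?_, by rw [wp_cons]⟩
            · rw [Sorted, List.pairwise_cons]
              exact ⟨fun x hx => hv2 x hx, hv1⟩
            · intro x hx
              rcases List.mem_cons.1 hx with rfl | hx
              · exact htB
              · exact le_trans (hv2 x hx) htB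
          | zero => rw [mul_zero]; exact Submodule.zero_mem _
          | add x y _ _ hx hy => rw [mul_add]; exact Submodule.add_mem _ hx hy
          | smul c x _ hx => rw [mul_smul_comm]; exact Submodule.smul_mem _ c hx
        have expand : ff A j p * wp A ((k, t) :: w') =
            (qh ^ (((t - p + 1).negOnePow : ℤ) * (A.d j * A.c j k))) •
              (ff A k t * (ff A j p * wp A w'))
              + (if k = j ∧ t = p + 1 then ((1 : 𝕂) - qd A j ^ 2) • wp A w' else 0) := by
          rw [wp_cons]
          calc ff A j p * (ff A k t * wp A w')
              = (ff A j p * ff A k t) * wp A w' := by rw [mul_assoc]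
            _ = _ := by
                rw [rel A j k p t htp, add_mul, smul_mul_assoc, mul_assoc]
                congr 1
                split_ifs
                · rw [smul_mul_assoc, one_mul]
                · rw [zero_mul]
        rw [expand]
        refine Submodule.add_mem _ (Submodule.smul_mem _ _ (hmul _ hrec)) ?_
        split_ifs
        · refine Submodule.smul_mem _ _ (Submodule.subset_span ⟨w', hs.2, ?_, rfl⟩)
          intro x hx
          exact le_trans (hBw' x hx) htB
        · exact Submodule.zero_mem _

lemma le_foldr_max (p : ℤ) : ∀ l : List (I × ℤ), p ≤ l.foldr (fun x b => max x.2 b) p := by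
  intro l
  induction l with
  | nil => exact le_refl _
  | cons a l ih => exact le_trans ih (le_max_right _ _)

lemma mem_le_foldr_max (p : ℤ) :
    ∀ l : List (I × ℤ), ∀ x ∈ l, x.2 ≤ l.foldr (fun x b => max x.2 b) p := by
  intro l
  induction l with
  | nil => simp
  | cons a l ih =>
    intro x hx
    rcases List.mem_cons.1 hx with rfl | hx
    · exact le_max_left _ _
    · exact le_trans (ih x hx) (le_max_right _ _)

lemma ff_mul_mem_V (j : I) (p : ℤ) (w : List (I × ℤ)) (hs : Sorted w) :
    ff A j p * wp A w ∈ V A :=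
  VB_le_V A _ (straighten A w.length w (le_refl _) j p _ hs (mem_le_foldr_max p w)
    (le_foldr_max p w))

lemma ff_mul_V_mem (j : I) (p : ℤ) : ∀ z ∈ V A, ff A j p * z ∈ V A := by
  intro z hz
  induction hz using Submodule.span_induction with
  | mem x hx =>
    obtain ⟨w, hw1, rfl⟩ := hx
    exact ff_mul_mem_V A j p w hw1
  | zero => rw [mul_zero]; exact Submodule.zero_mem _
  | add x y _ _ hx hy => rw [mul_add]; exact Submodule.add_mem _ hx hy
  | smul c x _ hx => rw [mul_smul_comm]; exact Submodule.smul_mem _ c hx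

lemma mono_mem_V : ∀ l : List (I × ℤ), wp A l ∈ V A := by
  intro l
  induction l with
  | nil => exact Submodule.subset_span ⟨[], by simp [Sorted], by simp⟩
  | cons a l ih =>
    rw [wp_cons]
    exact ff_mul_V_mem A a.1 a.2 _ ih

lemma V_mul_mem : ∀ x ∈ V A, ∀ y ∈ V A, x * y ∈ V A := by
  intro x hx
  induction hx using Submodule.span_induction with
  | mem x hx =>
    obtain ⟨w, hw1, rfl⟩ := hx
    intro y hy
    induction hy using Submodule.span_induction with
    | mem y hy =>
      obtain ⟨v, hv1, rfl⟩ := hy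
      rw [← wp_append]
      exact mono_mem_V A (w ++ v)
    | zero => rw [mul_zero]; exact Submodule.zero_mem _
    | add y z _ _ hy hz => rw [mul_add]; exact Submodule.add_mem _ hy hz
    | smul c y _ hy => rw [mul_smul_comm]; exact Submodule.smul_mem _ c hy
  | zero => intro y hy; rw [zero_mul]; exact Submodule.zero_mem _
  | add x z hx1 hz1 hx hz => intro y hy; rw [add_mul];
                             exact Submodule.add_mem _ (hx y hy) (hz y hy)
  | smul c x hx1 hx => intro y hy; rw [smul_mul_assoc]; exact Submodule.smul_mem _ c (hx y hy)

lemma one_mem_V : (1 : hA A) ∈ V A :=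
  Submodule.subset_span ⟨[], by simp [Sorted], by simp⟩

lemma mem_V : ∀ z : hA A, z ∈ V A := by
  intro z
  obtain ⟨y, rfl⟩ := RingQuot.mkAlgHom_surjective 𝕂 (hARel A) z
  induction y using FreeAlgebra.induction with
  | grade0 r =>
    rw [AlgHom.commutes, Algebra.algebraMap_eq_smul_one]
    exact Submodule.smul_mem _ r (one_mem_V A)
  | grade1 x =>
    exact Submodule.subset_span ⟨[(x.1, x.2)], by simp [Sorted], by simp [ff]⟩
  | mul a b ha hb => rw [map_mul]; exact V_mul_mem A _ ha _ hb
  | add a b ha hb => rw [map_add]; exact Submodule.add_mem _ ha hb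

end S14
namespace S14
variable {I : Type} [DecidableEq I] (A : GCM I)

section KeyM

variable (M : hA A →ₗ[𝕂] 𝕂)
variable (hMone : M 1 = 1)
variable (hMzero : ∀ (m : ℤ) (β : I →₀ ℤ), β ≠ 0 → ∀ y, y ∈ hAk A m → y ∈ hAwt A β →
      ∀ u ∈ hAgt A m, ∀ v ∈ hAlt A m, M (u * y * v) = 0)

include hMone hMzero

/-- key adjunction: `M (f_{i,m} z) = M (z f_{i,m+2})` for every `z`. -/
lemma keyM (i : I) (m : ℤ) (z : hA A) :
    M (ff A i m * z) = M (z * ff A i (m + 2)) := by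
  induction mem_V A z using Submodule.span_induction with
  | mem x hx =>
    obtain ⟨w, hw1, rfl⟩ := hx
    have h1 := claimC A M hMone hMzero i m w [] (by simpa using hw1) (by simp)
    have h2 := claimD A M hMone hMzero i m w [] (by simpa using hw1) (by simp)
    rw [wp_nil, one_mul] at h1
    rw [wp_nil, mul_one] at h2
    rw [h1, h2]
    by_cases h : w = [(i, m + 1)]
    · rw [if_pos ⟨rfl, h⟩, if_pos ⟨h, rfl⟩]
    · rw [if_neg (by rintro ⟨-, h1⟩; exact h h1), if_neg (by rintro ⟨h1, -⟩; exact h h1)]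
  | zero => rw [mul_zero, zero_mul]
  | add x y _ _ hx hy => rw [mul_add, add_mul, map_add, map_add, hx, hy]
  | smul c x _ hx => rw [mul_smul_comm, smul_mul_assoc, map_smul, map_smul, hx]

end KeyM

/-- commuting a low generator from the left across a word of high bands (no delta) -/
lemma comm_right (i : I) (P : ℤ) :
    ∀ (u : List (I × ℤ)), (∀ x ∈ u, P + 1 < x.2) →
      ∃ c : 𝕂, ff A i P * wp A u = c • (wp A u * ff A i P) := by
  intro u
  induction u with
  | nil => exact fun _ => ⟨1, by simp⟩
  | cons a u' ih =>
    intro h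
    obtain ⟨j, p⟩ := a
    have hp : P + 1 < p := h (j, p) (by simp)
    obtain ⟨c', hc'⟩ := ih (fun x hx => h x (by simp [hx]))
    have hrel := rel_nd A i j P p (by omega) (by rintro ⟨rfl, h2⟩; omega)
    refine ⟨qh ^ (((p - P + 1).negOnePow : ℤ) * (A.d i * A.c i j)) * c', ?_⟩
    rw [wp_cons]
    calc ff A i P * (ff A j p * wp A u')
        = (ff A i P * ff A j p) * wp A u' := by rw [mul_assoc]
      _ = (qh ^ (((p - P + 1).negOnePow : ℤ) * (A.d i * A.c i j))) •
            (ff A j p * (ff A i P * wp A u')) := by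
          rw [hrel, smul_mul_assoc, mul_assoc]
      _ = _ := by
          rw [hc', mul_smul_comm, smul_smul]
          congr 1
          noncomm_ring

/-- commuting a high generator from the right across a word of low bands (no delta) -/
lemma comm_left (i : I) (P : ℤ) :
    ∀ (u : List (I × ℤ)), (∀ x ∈ u, x.2 + 1 < P) →
      ∃ c : 𝕂, wp A u * ff A i P = c • (ff A i P * wp A u) := by
  intro u
  induction u with
  | nil => exact fun _ => ⟨1, by simp⟩
  | cons a u' ih =>
    intro h
    obtain ⟨j, p⟩ := a
    have hp : p + 1 < P := h (j, p) (by simp)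
    obtain ⟨c', hc'⟩ := ih (fun x hx => h x (by simp [hx]))
    have hrel := rel_nd A j i p P (by omega) (by rintro ⟨rfl, h2⟩; omega)
    refine ⟨c' * qh ^ (((P - p + 1).negOnePow : ℤ) * (A.d j * A.c j i)), ?_⟩
    rw [wp_cons]
    calc ff A j p * wp A u' * ff A i P
        = ff A j p * (wp A u' * ff A i P) := by rw [mul_assoc]
      _ = c' • (ff A j p * (ff A i P * wp A u')) := by rw [hc', mul_smul_comm]
      _ = c' • ((ff A j p * ff A i P) * wp A u') := by rw [mul_assoc]
      _ = _ := by
          rw [hrel, smul_mul_assoc, smul_smul, mul_assoc]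

/-- span of words with all bands `≤ m` -/
def Wle (m : ℤ) : Submodule 𝕂 (hA A) :=
  Submodule.span 𝕂 {x | ∃ w : List (I × ℤ), (∀ p ∈ w, p.2 ≤ m) ∧ x = wp A w}

/-- span of words with all bands `≥ m` -/
def Wge (m : ℤ) : Submodule 𝕂 (hA A) :=
  Submodule.span 𝕂 {x | ∃ w : List (I × ℤ), (∀ p ∈ w, m ≤ p.2) ∧ x = wp A w}

lemma Wle_mul (m : ℤ) : ∀ x ∈ Wle A m, ∀ y ∈ Wle A m, x * y ∈ Wle A m := by
  intro x hx
  induction hx using Submodule.span_induction with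
  | mem a ha =>
    obtain ⟨w, hw1, rfl⟩ := ha
    intro y hy
    induction hy using Submodule.span_induction with
    | mem b hb =>
      obtain ⟨v, hv1, rfl⟩ := hb
      refine Submodule.subset_span ⟨w ++ v, ?_, (wp_append A w v).symm⟩
      intro x hx
      rcases List.mem_append.1 hx with hx | hx
      · exact hw1 x hx
      · exact hv1 x hx
    | zero => rw [mul_zero]; exact Submodule.zero_mem _
    | add b b' _ _ hb hb' => rw [mul_add]; exact Submodule.add_mem _ hb hb'
    | smul c b _ hb => rw [mul_smul_comm]; exact Submodule.smul_mem _ c hb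
  | zero => intro y hy; rw [zero_mul]; exact Submodule.zero_mem _
  | add a a' _ _ ha ha' => intro y hy; rw [add_mul];
                           exact Submodule.add_mem _ (ha y hy) (ha' y hy)
  | smul c a _ ha => intro y hy; rw [smul_mul_assoc]; exact Submodule.smul_mem _ c (ha y hy)

lemma hAle_le_Wle (m : ℤ) : ∀ z ∈ hAle A m, z ∈ Wle A m := by
  intro z hz
  induction hz using Algebra.adjoin_induction with
  | mem x hx =>
    obtain ⟨i, k, hk, rfl⟩ := hx
    exact Submodule.subset_span ⟨[(i, k)], by simpa using hk, by simp⟩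
  | algebraMap r =>
    rw [Algebra.algebraMap_eq_smul_one]
    exact Submodule.smul_mem _ r (Submodule.subset_span ⟨[], by simp, by simp⟩)
  | add x y _ _ hx hy => exact Submodule.add_mem _ hx hy
  | mul x y _ _ hx hy => exact Wle_mul A m x hx y hy

lemma Wge_mul (m : ℤ) : ∀ x ∈ Wge A m, ∀ y ∈ Wge A m, x * y ∈ Wge A m := by
  intro x hx
  induction hx using Submodule.span_induction with
  | mem a ha =>
    obtain ⟨w, hw1, rfl⟩ := ha
    intro y hy
    induction hy using Submodule.span_induction with
    | mem b hb =>
      obtain ⟨v, hv1, rfl⟩ := hb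
      refine Submodule.subset_span ⟨w ++ v, ?_, (wp_append A w v).symm⟩
      intro x hx
      rcases List.mem_append.1 hx with hx | hx
      · exact hw1 x hx
      · exact hv1 x hx
    | zero => rw [mul_zero]; exact Submodule.zero_mem _
    | add b b' _ _ hb hb' => rw [mul_add]; exact Submodule.add_mem _ hb hb'
    | smul c b _ hb => rw [mul_smul_comm]; exact Submodule.smul_mem _ c hb
  | zero => intro y hy; rw [zero_mul]; exact Submodule.zero_mem _
  | add a a' _ _ ha ha' => intro y hy; rw [add_mul];
                           exact Submodule.add_mem _ (ha y hy) (ha' y hy)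
  | smul c a _ ha => intro y hy; rw [smul_mul_assoc]; exact Submodule.smul_mem _ c (ha y hy)

lemma hAge_le_Wge (m : ℤ) : ∀ z ∈ hAge A m, z ∈ Wge A m := by
  intro z hz
  induction hz using Algebra.adjoin_induction with
  | mem x hx =>
    obtain ⟨i, k, hk, rfl⟩ := hx
    exact Submodule.subset_span ⟨[(i, k)], by simpa using hk, by simp⟩
  | algebraMap r =>
    rw [Algebra.algebraMap_eq_smul_one]
    exact Submodule.smul_mem _ r (Submodule.subset_span ⟨[], by simp, by simp⟩)
  | add x y _ _ hx hy => exact Submodule.add_mem _ hx hy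
  | mul x y _ _ hx hy => exact Wge_mul A m x hx y hy

end S14
namespace S14
variable {I : Type} [DecidableEq I] (A : GCM I)

lemma Dwp (Dm : hA A ≃ₐ[𝕂] hA A) (hD : ∀ i p, Dm (ff A i p) = ff A i (p + 1)) :
    ∀ w : List (I × ℤ), Dm (wp A w) = wp A (w.map fun p => (p.1, p.2 + 1)) := by
  intro w
  induction w with
  | nil => simp
  | cons a l ih => rw [wp_cons, map_mul, hD, ih, List.map_cons, wp_cons]

lemma Dm_Wge (m : ℤ) (Dm : hA A ≃ₐ[𝕂] hA A)
    (hD : ∀ i p, Dm (ff A i p) = ff A i (p + 1)) :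
    ∀ z ∈ Wge A m, Dm z ∈ Wge A (m + 1) := by
  intro z hz
  induction hz using Submodule.span_induction with
  | mem a ha =>
    obtain ⟨w, hw1, rfl⟩ := ha
    rw [Dwp A Dm hD w]
    refine Submodule.subset_span ⟨w.map fun p => (p.1, p.2 + 1), ?_, rfl⟩
    intro x hx
    obtain ⟨y, hy, rfl⟩ := List.mem_map.1 hx
    have := hw1 y hy
    simp only
    omega
  | zero => rw [map_zero]; exact Submodule.zero_mem _
  | add a b _ _ ha hb => rw [map_add]; exact Submodule.add_mem _ ha hb
  | smul c a _ ha => rw [map_smul]; exact Submodule.smul_mem _ c ha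

lemma ffwt (i : I) (t : ℤ) : ff A i t ∈ hAwt A (wtOf [(i, t)]) := by
  have := wp_mem_wt A [(i, t)]
  rwa [wp_single] at this

section Zero

variable (M : hA A →ₗ[𝕂] 𝕂)
variable (hMzero : ∀ (m : ℤ) (β : I →₀ ℤ), β ≠ 0 → ∀ y, y ∈ hAk A m → y ∈ hAwt A β →
      ∀ u ∈ hAgt A m, ∀ v ∈ hAlt A m, M (u * y * v) = 0)

include hMzero

lemma ZL (i : I) (m : ℤ) : ∀ x ∈ Wle A m, ∀ z : List (I × ℤ), (∀ p ∈ z, p.2 ≤ m + 1) →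
    M (x * (ff A i (m + 2) * wp A z)) = 0 := by
  intro x hx
  induction hx using Submodule.span_induction with
  | mem a ha =>
    obtain ⟨u, hu1, rfl⟩ := ha
    intro z hz
    obtain ⟨c, hc⟩ := comm_left A i (m + 2) u (fun x hx => by have := hu1 x hx; omega)
    have e1 : wp A u * (ff A i (m + 2) * wp A z) =
        c • (ff A i (m + 2) * wp A (u ++ z)) := by
      calc wp A u * (ff A i (m + 2) * wp A z)
          = (wp A u * ff A i (m + 2)) * wp A z := by rw [mul_assoc]
        _ = c • (ff A i (m + 2) * wp A u) * wp A z := by rw [hc]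
        _ = c • (ff A i (m + 2) * wp A (u ++ z)) := by
            rw [smul_mul_assoc, wp_append, mul_assoc]
    rw [e1, map_smul]
    have h0 := hMzero (m + 2) (wtOf [(i, m + 2)])
      (wtOf_ne_zero (m + 2) (i, m + 2) [] (by simp)) (ff A i (m + 2))
      (ff_mem_hAk A i (m + 2)) (ffwt A i (m + 2)) 1 ((hAgt A (m + 2)).one_mem)
      (wp A (u ++ z))
      (wp_mem A (hAlt A (m + 2)) (u ++ z) (by
        intro x hx
        rcases List.mem_append.1 hx with hx | hx
        · exact ff_mem_hAle A (by have := hu1 x hx; omega) x.1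
        · exact ff_mem_hAle A (by have := hz x hx; omega) x.1))
    rw [one_mul] at h0
    rw [h0, smul_zero]
  | zero => intro z hz; rw [zero_mul, map_zero]
  | add a b _ _ ha hb =>
    intro z hz
    rw [add_mul, map_add, ha z hz, hb z hz, add_zero]
  | smul c a _ ha =>
    intro z hz
    rw [smul_mul_assoc, map_smul, ha z hz, smul_zero]

lemma ZR (i : I) (m : ℤ) : ∀ z ∈ Wge A (m + 1), ∀ u : List (I × ℤ), (∀ p ∈ u, m ≤ p.2) →
    M ((wp A u * ff A i (m - 1)) * z) = 0 := by
  intro z hz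
  induction hz using Submodule.span_induction with
  | mem a ha =>
    obtain ⟨w, hw1, rfl⟩ := ha
    intro u hu
    obtain ⟨c, hc⟩ := comm_right A i (m - 1) w (fun x hx => by have := hw1 x hx; omega)
    have e1 : (wp A u * ff A i (m - 1)) * wp A w =
        c • (wp A (u ++ w) * ff A i (m - 1)) := by
      calc (wp A u * ff A i (m - 1)) * wp A w
          = wp A u * (ff A i (m - 1) * wp A w) := by rw [mul_assoc]
        _ = wp A u * (c • (wp A w * ff A i (m - 1))) := by rw [hc]
        _ = c • (wp A (u ++ w) * ff A i (m - 1)) := by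
            rw [mul_smul_comm, wp_append, mul_assoc]
    rw [e1, map_smul]
    have h0 := hMzero (m - 1) (wtOf [(i, m - 1)])
      (wtOf_ne_zero (m - 1) (i, m - 1) [] (by simp)) (ff A i (m - 1))
      (ff_mem_hAk A i (m - 1)) (ffwt A i (m - 1))
      (wp A (u ++ w))
      (wp_mem A (hAgt A (m - 1)) (u ++ w) (by
        intro x hx
        rcases List.mem_append.1 hx with hx | hx
        · exact ff_mem_hAge A (by have := hu x hx; omega) x.1
        · exact ff_mem_hAge A (by have := hw1 x hx; omega) x.1))
      1 ((hAlt A (m - 1)).one_mem)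
    rw [mul_one] at h0
    rw [h0, smul_zero]
  | zero => intro u hu; rw [mul_zero, map_zero]
  | add a b _ _ ha hb =>
    intro u hu
    rw [mul_add, map_add, ha u hu, hb u hu, add_zero]
  | smul c a _ ha =>
    intro u hu
    rw [mul_smul_comm, map_smul, ha u hu, smul_zero]

end Zero
end S14
/-- `⟨⟨f_{i,m} x, y⟩⟩ = ⟨⟨x, y f_{i,m+1}⟩⟩` and
`⟨⟨x f_{i,m}, y⟩⟩ = ⟨⟨x, f_{i,m-1} y⟩⟩` for all `x, y ∈ Â`; moreover for
`x, y ∈ Â_{≤m}`, `⟨⟨f_{i,m} x, y⟩⟩ = ⟨⟨x, E_{i,m}(y)⟩⟩`, and for `u, v ∈ Â_{≥m}`,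
`⟨⟨u, v f_{i,m}⟩⟩ = ⟨⟨E*_{i,m}(u), v⟩⟩`.
Here `⟨⟨x,y⟩⟩ := M(x 𝒟̄(y))`, and `Eop`/`Esop` are the linear operators `E_{i,m}`,
`E*_{i,m}`, characterized on homogeneous elements by the `q`-brackets. -/
theorem statement14 (A : GCM I)
    (M : hA A →ₗ[𝕂] 𝕂)
    (hMone : M 1 = 1)
    (hMzero : ∀ (m : ℤ) (β : I →₀ ℤ), β ≠ 0 → ∀ y, y ∈ hAk A m → y ∈ hAwt A β →
      ∀ u ∈ hAgt A m, ∀ v ∈ hAlt A m, M (u * y * v) = 0)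
    (Dm : hA A ≃ₐ[𝕂] hA A)
    (hD : ∀ i p, Dm (ff A i p) = ff A i (p + 1))
    (Eop Esop : I → ℤ → Module.End 𝕂 (hA A))
    (hEop : ∀ (i : I) (m : ℤ) (β : I →₀ ℤ) (x : hA A), x ∈ hAwt A β →
      Eop i m x = Ebr A i m β x)
    (hEsop : ∀ (i : I) (m : ℤ) (β : I →₀ ℤ) (x : hA A), x ∈ hAwt A β →
      Esop i m x = Esbr A i m β x) :
    (∀ (i : I) (m : ℤ) (x y : hA A),
      M ((ff A i m * x) * Dm y) = M (x * Dm (y * ff A i (m + 1))) ∧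
      M ((x * ff A i m) * Dm y) = M (x * Dm (ff A i (m - 1) * y))) ∧
    (∀ (i : I) (m : ℤ) (x y : hA A), x ∈ hAle A m → y ∈ hAle A m →
      M ((ff A i m * x) * Dm y) = M (x * Dm (Eop i m y))) ∧
    (∀ (i : I) (m : ℤ) (u v : hA A), u ∈ hAge A m → v ∈ hAge A m →
      M (u * Dm (v * ff A i m)) = M (Esop i m u * Dm v)) := by
  classical
  have key : ∀ (i : I) (m : ℤ) (z : hA A), M (ff A i m * z) = M (z * ff A i (m + 2)) :=
    fun i m z => S14.keyM A M hMone hMzero i m z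
  refine ⟨?_, ?_, ?_⟩
  · -- part 1
    intro i m x y
    constructor
    · rw [map_mul Dm y (ff A i (m + 1)), hD, show m + 1 + 1 = m + 2 from by ring]
      rw [mul_assoc (ff A i m) x (Dm y), key i m (x * Dm y), mul_assoc]
    · rw [map_mul Dm (ff A i (m - 1)) y, hD, show m - 1 + 1 = m from by ring, ← mul_assoc]
  · -- part 2
    intro i m x y hx hy
    have hx' := S14.hAle_le_Wle A m x hx
    have hy' := S14.hAle_le_Wle A m y hy
    clear hx hy
    induction hy' using Submodule.span_induction with
    | mem b hb =>
      obtain ⟨w, hw1, rfl⟩ := hb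
      rw [hEop i m (S14.wtOf w) (S14.wp A w) (S14.wp_mem_wt A w), Ebr,
        map_sub Dm, map_smul Dm, map_mul Dm, map_mul Dm, hD,
        show m + 1 + 1 = m + 2 from by ring, S14.Dwp A Dm hD w]
      set w' := w.map fun p => (p.1, p.2 + 1) with hw'
      have hw'band : ∀ p ∈ w', p.2 ≤ m + 1 := by
        intro p hp
        obtain ⟨q, hq, rfl⟩ := List.mem_map.1 hp
        have := hw1 q hq
        simp only
        omega
      rw [mul_sub, mul_smul_comm, map_sub M, map_smul M]
      rw [S14.ZL A M hMzero i m x hx' w' hw'band, smul_zero, sub_zero]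
      rw [← mul_assoc x (S14.wp A w') (ff A i (m + 2)), ← key i m (x * S14.wp A w'),
        ← mul_assoc]
    | zero => simp
    | add b b' _ _ hb hb' => simp only [map_add, mul_add]; rw [hb, hb']
    | smul c b _ hb => simp only [map_smul, mul_smul_comm]; rw [hb]
  · -- part 3
    intro i m u v hu hv
    have hu' := S14.hAge_le_Wge A m u hu
    have hv' : Dm v ∈ S14.Wge A (m + 1) :=
      S14.Dm_Wge A m Dm hD v (S14.hAge_le_Wge A m v hv)
    clear hu hv
    rw [map_mul Dm v (ff A i m), hD]
    induction hu' using Submodule.span_induction with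
    | mem a ha =>
      obtain ⟨w, hw1, rfl⟩ := ha
      rw [hEsop i m (S14.wtOf w) (S14.wp A w) (S14.wp_mem_wt A w), Esbr]
      rw [sub_mul, smul_mul_assoc, map_sub M, map_smul M]
      rw [S14.ZR A M hMzero i m (Dm v) hv' w hw1, smul_zero, sub_zero]
      have hk := key i (m - 1) (S14.wp A w * Dm v)
      rw [show m - 1 + 2 = m + 1 from by ring] at hk
      calc M (S14.wp A w * (Dm v * ff A i (m + 1)))
          = M (S14.wp A w * Dm v * ff A i (m + 1)) := by rw [mul_assoc]
        _ = M (ff A i (m - 1) * (S14.wp A w * Dm v)) := hk.symm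
        _ = M (ff A i (m - 1) * S14.wp A w * Dm v) := by rw [mul_assoc]
    | zero => simp
    | add a b _ _ ha hb => simp only [map_add, add_mul]; rw [ha, hb]
    | smul c a _ ha => simp only [map_smul, smul_mul_assoc]; rw [ha]

end
end
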